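/- arXiv:2009.02922 — 2 statements merged into one kernel-verified Lean document; each statement's English description precedes it below -/
import Mathlib

section
/- For all integers r ≥ 2, s ≥ 0, k ≥ 2 there exists α = α(r, s, k) ∈ ℝ such that, setting β := s(2^{r-1} − 1): for any finite r-grid B and any K_{k,…,k}-free subset A ⊆ B of grid-complexity s, one has |A| ≤ α · δ^r_{r-1}(B) · log^β(δ^r_{r-1}(B) + 1). -/
set_option linter.unusedSectionVars false

open Finset


open Finset

section Helpers

lemma exists_split {β : Type} [DecidableEq β] (f : β → ℕ) :
    ∀ (h : ℕ) (I : Finset β), h ≤ I.card →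
      ∃ IL ⊆ I, IL.card = h ∧ ∀ b ∈ IL, ∀ b' ∈ I \ IL, f b' ≤ f b := by
  intro h
  induction h with
  | zero => exact fun I _ => ⟨∅, Finset.empty_subset _, rfl, by simp⟩
  | succ h ih =>
    intro I hI
    obtain ⟨IL, hsub, hcard, hdom⟩ := ih I (le_trans (Nat.le_succ h) hI)
    have hne : (I \ IL).Nonempty := by
      rw [← Finset.card_pos, Finset.card_sdiff_of_subset hsub]; omega
    obtain ⟨b₀, hb₀mem, hb₀max⟩ := Finset.exists_max_image (I \ IL) f hne
    refine ⟨insert b₀ IL, ?_, ?_, ?_⟩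
    · exact Finset.insert_subset (Finset.mem_sdiff.1 hb₀mem).1 hsub
    · rw [Finset.card_insert_of_notMem (Finset.mem_sdiff.1 hb₀mem).2, hcard]
    · intro b hb b' hb'
      have hb'' : b' ∈ I \ IL := by
        rw [Finset.mem_sdiff] at hb' ⊢
        exact ⟨hb'.1, fun hh => hb'.2 (Finset.mem_insert_of_mem hh)⟩
      rcases Finset.mem_insert.1 hb with rfl | hb
      · exact hb₀max b' hb''
      · exact hdom b hb b' hb''

lemma chain_subset {α : Type} [Finite α] {a b : Set α}
    (hc : a ⊆ b ∨ b ⊆ a) (h : a.ncard ≤ b.ncard) : a ⊆ b := by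
  rcases hc with h' | h'
  · exact h'
  · exact (Set.eq_of_subset_of_ncard_le h' h (Set.toFinite a)).symm.subset

end Helpers

section ML

variable {R C : Type} [Fintype R] [Fintype C]

/-- The set of points of the "grid" `R × C` lying over `P`, with column in `I`,
satisfying all the staircase constraints. -/
def MLset (s : ℕ) (sect : Fin s → C → Set R) (P : Set R) (I : Finset C) : Set (R × C) :=
  {x | x.1 ∈ P ∧ x.2 ∈ I ∧ ∀ j, x.1 ∈ sect j x.2}

lemma MLset_mono {s : ℕ} {sect : Fin s → C → Set R} {P P' : Set R} {I I' : Finset C}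
    (hP : P' ⊆ P) (hI : I' ⊆ I) : MLset s sect P' I' ⊆ MLset s sect P I :=
  fun _ h => ⟨hP h.1, hI h.2.1, h.2.2⟩

lemma MLset_ncard_prod (sect : Fin 0 → C → Set R) (P : Set R) (I : Finset C) :
    (MLset 0 sect P I).ncard = P.ncard * I.card := by
  have : MLset 0 sect P I = P ×ˢ (↑I : Set C) := by
    ext x
    constructor
    · exact fun h => ⟨h.1, h.2.1⟩
    · exact fun h => ⟨h.1, h.2, fun j => j.elim0⟩
  rw [this]
  rw [← Nat.card_coe_set_eq, Nat.card_congr (Equiv.Set.prod _ _), Nat.card_prod,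
    Nat.card_coe_set_eq, Nat.card_coe_set_eq, Set.ncard_coe_finset]

theorem ML (k G : ℕ) (hk : 2 ≤ k) :
    ∀ (s : ℕ) (sect : Fin s → C → Set R),
      (∀ j b b', sect j b ⊆ sect j b' ∨ sect j b' ⊆ sect j b) →
      ∀ (P : Set R) (I : Finset C),
        (∀ T : Finset C, T.card = k →
          {a : R | ∀ b ∈ T, (a, b) ∈ MLset s sect P I}.ncard ≤ G) →
        (MLset s sect P I).ncard
          ≤ (k-1) * (P.ncard + I.card * G) * (Nat.clog 2 I.card + 1)^s := by
  classical
  intro s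
  induction s with
  | zero =>
    intro sect _ P I hfree
    rw [MLset_ncard_prod, pow_zero, mul_one]
    rcases le_or_gt k I.card with hki | hki
    · obtain ⟨T, hTsub, hTcard⟩ := Finset.exists_subset_card_eq hki
      have hPG : P.ncard ≤ G := by
        refine le_trans (le_of_eq ?_) (hfree T hTcard)
        congr 1
        ext a
        simp only [Set.mem_setOf_eq]
        constructor
        · intro ha b hb
          exact ⟨ha, hTsub hb, fun j => j.elim0⟩
        · intro ha
          obtain ⟨b, hb⟩ : T.Nonempty := Finset.card_pos.1 (by omega)
          exact (ha b hb).1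
      calc P.ncard * I.card ≤ G * I.card := Nat.mul_le_mul_right _ hPG
        _ = I.card * G := Nat.mul_comm _ _
        _ ≤ P.ncard + I.card * G := Nat.le_add_left _ _
        _ ≤ (k-1) * (P.ncard + I.card * G) := Nat.le_mul_of_pos_left _ (by omega)
    · calc P.ncard * I.card ≤ P.ncard * (k-1) := Nat.mul_le_mul_left _ (by omega)
        _ = (k-1) * P.ncard := Nat.mul_comm _ _
        _ ≤ (k-1) * (P.ncard + I.card * G) := Nat.mul_le_mul_left _ (Nat.le_add_right _ _)
  | succ s ihs =>
    intro sect hchain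
    suffices key : ∀ (n : ℕ) (P : Set R) (I : Finset C), I.card ≤ n →
        (∀ T : Finset C, T.card = k →
          {a : R | ∀ b ∈ T, (a, b) ∈ MLset (s+1) sect P I}.ncard ≤ G) →
        (MLset (s+1) sect P I).ncard
          ≤ (k-1) * (P.ncard + I.card * G) * (Nat.clog 2 I.card + 1)^(s+1) from
      fun P I hfree => key I.card P I le_rfl hfree
    intro n
    induction n with
    | zero =>
      intro P I hcard _
      have : I = ∅ := Finset.card_eq_zero.1 (by omega)
      subst this
      have : MLset (s+1) sect P ∅ = ∅ := by
        ext x; simp [MLset]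
      simp [this]
    | succ n ihn =>
      intro P I hcard hfree
      rcases le_or_gt I.card n with hle | hgt
      · exact ihn P I hle hfree
      have ht : I.card = n + 1 := by omega
      set sect' : Fin s → C → Set R := fun j => sect j.castSucc with hsect'
      have hchain' : ∀ j b b', sect' j b ⊆ sect' j b' ∨ sect' j b' ⊆ sect' j b :=
        fun j b b' => hchain j.castSucc b b'
      rcases Nat.lt_or_ge I.card 2 with ht1 | ht2
      · -- |I| = 1 : resolve the last staircase at the unique column
        have ht1' : I.card = 1 := by omega
        obtain ⟨b₁, hb₁⟩ := Finset.card_eq_one.1 ht1'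
        subst hb₁
        set Q := P ∩ sect (Fin.last s) b₁ with hQ
        have hsub : MLset (s+1) sect P {b₁} ⊆ MLset s sect' Q {b₁} := by
          rintro ⟨a, b⟩ ⟨h1, h2, h3⟩
          have hb2 : b = b₁ := by simpa using h2
          subst hb2
          exact ⟨⟨h1, h3 (Fin.last s)⟩, h2, fun j => h3 j.castSucc⟩
        have hfree' : ∀ T : Finset C, T.card = k →
            {a : R | ∀ b ∈ T, (a, b) ∈ MLset s sect' Q {b₁}}.ncard ≤ G := by
          intro T hT
          refine le_trans (Set.ncard_le_ncard ?_ (Set.toFinite _)) (hfree T hT)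
          intro a ha
          intro b hb
          obtain ⟨⟨h1, h1'⟩, h2, h3⟩ := ha b hb
          have hb2 : b = b₁ := by simpa using h2
          subst hb2
          refine ⟨h1, h2, fun j => ?_⟩
          refine Fin.lastCases ?_ (fun j' => h3 j') j
          exact h1'
        calc (MLset (s+1) sect P {b₁}).ncard
            ≤ (MLset s sect' Q {b₁}).ncard := Set.ncard_le_ncard hsub (Set.toFinite _)
          _ ≤ (k-1) * (Q.ncard + ({b₁} : Finset C).card * G) * (Nat.clog 2 ({b₁} : Finset C).card + 1)^s :=
              ihs sect' hchain' Q {b₁} hfree'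
          _ ≤ (k-1) * (P.ncard + ({b₁} : Finset C).card * G) * (Nat.clog 2 ({b₁} : Finset C).card + 1)^(s+1) := by
              have hQP : Q.ncard ≤ P.ncard :=
                Set.ncard_le_ncard Set.inter_subset_left (Set.toFinite _)
              have : Nat.clog 2 ({b₁} : Finset C).card = 0 := by simp
              rw [this]
              simp only [Finset.card_singleton]
              gcongr <;> omega
      · -- |I| ≥ 2 : split
        set t := I.card with htt
        set N : C → ℕ := fun b => (sect (Fin.last s) b).ncard with hN
        obtain ⟨IL, hILsub, hILcard, hdom⟩ := exists_split N (t/2) I (by omega)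
        set IR := I \ IL with hIR
        have hIRcard : IR.card = t - t/2 := by rw [hIR, Finset.card_sdiff_of_subset hILsub, hILcard]
        have hILne : IL.Nonempty := Finset.card_pos.1 (by omega)
        have hIRne : IR.Nonempty := Finset.card_pos.1 (by omega)
        obtain ⟨bs, hbsIL, hbsmin⟩ := Finset.exists_min_image IL N hILne
        obtain ⟨bt, hbtIR, hbtmax⟩ := Finset.exists_max_image IR N hIRne
        set Ss : Set R := sect (Fin.last s) bs with hSs
        set St : Set R := sect (Fin.last s) bt with hSt
        have hILS : ∀ b ∈ IL, Ss ⊆ sect (Fin.last s) b :=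
          fun b hb => chain_subset (hchain _ _ _) (hbsmin b hb)
        have hIRS : ∀ b ∈ IR, sect (Fin.last s) b ⊆ St :=
          fun b hb => chain_subset (hchain _ _ _) (hbtmax b hb)
        have hSS : St ⊆ Ss := chain_subset (hchain _ _ _) (hdom bs hbsIL bt hbtIR)
        -- cover
        have hcover : MLset (s+1) sect P I ⊆
            MLset s sect' (P ∩ Ss) IL ∪
              (MLset (s+1) sect (P \ Ss) IL ∪ MLset (s+1) sect (P ∩ St) IR) := by
          rintro ⟨a, b⟩ ⟨h1, h2, h3⟩
          by_cases hbL : b ∈ IL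
          · by_cases haS : a ∈ Ss
            · exact Or.inl ⟨⟨h1, haS⟩, hbL, fun j => h3 j.castSucc⟩
            · exact Or.inr (Or.inl ⟨⟨h1, haS⟩, hbL, h3⟩)
          · have hbR : b ∈ IR := Finset.mem_sdiff.2 ⟨h2, hbL⟩
            exact Or.inr (Or.inr ⟨⟨h1, hIRS b hbR (h3 (Fin.last s))⟩, hbR, h3⟩)
        -- three bounds
        have hfree1 : ∀ T : Finset C, T.card = k →
            {a : R | ∀ b ∈ T, (a, b) ∈ MLset s sect' (P ∩ Ss) IL}.ncard ≤ G := by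
          intro T hT
          refine le_trans (Set.ncard_le_ncard ?_ (Set.toFinite _)) (hfree T hT)
          intro a ha b hb
          obtain ⟨⟨h1, h1'⟩, h2, h3⟩ := ha b hb
          exact ⟨h1, hILsub h2, fun j => Fin.lastCases (hILS b h2 h1') (fun j' => h3 j') j⟩
        have hfree2 : ∀ T : Finset C, T.card = k →
            {a : R | ∀ b ∈ T, (a, b) ∈ MLset (s+1) sect (P \ Ss) IL}.ncard ≤ G := by
          intro T hT
          refine le_trans (Set.ncard_le_ncard ?_ (Set.toFinite _)) (hfree T hT)
          intro a ha b hb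
          exact MLset_mono Set.diff_subset hILsub (ha b hb)
        have hfree3 : ∀ T : Finset C, T.card = k →
            {a : R | ∀ b ∈ T, (a, b) ∈ MLset (s+1) sect (P ∩ St) IR}.ncard ≤ G := by
          intro T hT
          refine le_trans (Set.ncard_le_ncard ?_ (Set.toFinite _)) (hfree T hT)
          intro a ha b hb
          exact MLset_mono Set.inter_subset_left (Finset.sdiff_subset) (ha b hb)
        have T1 := ihs sect' hchain' (P ∩ Ss) IL hfree1
        have T2 := ihn (P \ Ss) IL (by omega) hfree2
        have T3 := ihn (P ∩ St) IR (by omega) hfree3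
        -- clog facts
        set c := Nat.clog 2 t with hc
        have hc1 : 1 ≤ c := Nat.clog_pos one_lt_two (by omega)
        have h2c : t ≤ 2^c := Nat.le_pow_clog one_lt_two _
        have hcD : 2^c = 2 * 2^(c-1) := by
          conv_lhs => rw [show c = (c-1) + 1 by omega]
          ring
        have hILD : IL.card ≤ 2^(c-1) := by omega
        have hIRD : IR.card ≤ 2^(c-1) := by omega
        have hLc : Nat.clog 2 IL.card + 1 ≤ c := by
          have := (Nat.clog_le_iff_le_pow one_lt_two).2 hILD
          omega
        have hRc : Nat.clog 2 IR.card + 1 ≤ c := by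
          have := (Nat.clog_le_iff_le_pow one_lt_two).2 hIRD
          omega
        -- ncard facts
        have hP1 : (P ∩ Ss).ncard ≤ P.ncard :=
          Set.ncard_le_ncard Set.inter_subset_left (Set.toFinite _)
        have hP23 : (P \ Ss).ncard + (P ∩ St).ncard ≤ P.ncard := by
          have hdisj : Disjoint (P \ Ss) (P ∩ St) := by
            rw [Set.disjoint_left]
            rintro x ⟨hxP, hxS⟩ ⟨_, hxT⟩
            exact hxS (hSS hxT)
          rw [← Set.ncard_union_eq hdisj (Set.toFinite _) (Set.toFinite _)]
          exact Set.ncard_le_ncard (Set.union_subset Set.diff_subset Set.inter_subset_left)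
            (Set.toFinite _)
        -- pow facts
        have hpow1 : (Nat.clog 2 IL.card + 1)^s ≤ c^s := Nat.pow_le_pow_left (by omega) s
        have hpow2 : (Nat.clog 2 IL.card + 1)^(s+1) ≤ c^(s+1) := Nat.pow_le_pow_left (by omega) _
        have hpow3 : (Nat.clog 2 IR.card + 1)^(s+1) ≤ c^(s+1) := Nat.pow_le_pow_left (by omega) _
        have hpowfin : c^s + c^(s+1) ≤ (c+1)^(s+1) := by
          calc c^s + c^(s+1) = c^s * (1 + c) := by ring
            _ ≤ (c+1)^s * (1 + c) := Nat.mul_le_mul_right _ (Nat.pow_le_pow_left (by omega) s)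
            _ = (c+1)^(s+1) := by ring
        have hcards : IL.card + IR.card = t := by omega
        calc (MLset (s+1) sect P I).ncard
            ≤ (MLset s sect' (P ∩ Ss) IL).ncard +
              ((MLset (s+1) sect (P \ Ss) IL).ncard + (MLset (s+1) sect (P ∩ St) IR).ncard) := by
              refine le_trans (Set.ncard_le_ncard hcover (Set.toFinite _)) ?_
              refine le_trans (Set.ncard_union_le _ _) ?_
              exact Nat.add_le_add_left (Set.ncard_union_le _ _) _
          _ ≤ (k-1) * ((P ∩ Ss).ncard + IL.card * G) * c^s +
              ((k-1) * ((P \ Ss).ncard + IL.card * G) * c^(s+1) +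
               (k-1) * ((P ∩ St).ncard + IR.card * G) * c^(s+1)) := by
              gcongr
              · exact le_trans T1 (Nat.mul_le_mul_left _ hpow1)
              · exact le_trans T2 (Nat.mul_le_mul_left _ hpow2)
              · exact le_trans T3 (Nat.mul_le_mul_left _ hpow3)
          _ ≤ (k-1) * ((P.ncard + t * G) * c^s) +
              (k-1) * ((P.ncard + t * G) * c^(s+1)) := by
              rw [mul_assoc, mul_assoc, mul_assoc, ← Nat.mul_add, ← Nat.mul_add, ← Nat.mul_add]
              refine Nat.mul_le_mul_left _ ?_
              have e1 : ((P ∩ Ss).ncard + IL.card * G) * c^s ≤ (P.ncard + t*G) * c^s := by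
                refine Nat.mul_le_mul_right _ ?_
                have : IL.card * G ≤ t * G := Nat.mul_le_mul_right _ (by omega)
                omega
              have e2 : ((P \ Ss).ncard + IL.card * G) * c^(s+1) +
                  ((P ∩ St).ncard + IR.card * G) * c^(s+1) ≤ (P.ncard + t*G) * c^(s+1) := by
                rw [← Nat.add_mul]
                refine Nat.mul_le_mul_right _ ?_
                have : IL.card * G + IR.card * G = t * G := by
                  rw [← Nat.add_mul, hcards]
                omega
              omega
          _ ≤ (k-1) * (P.ncard + t * G) * (c+1)^(s+1) := by
              rw [mul_assoc]
              rw [← Nat.mul_add]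
              refine Nat.mul_le_mul_left _ ?_
              rw [← Nat.mul_add]
              exact Nat.mul_le_mul_left _ hpowfin
          _ = (k-1) * (P.ncard + I.card * G) * (Nat.clog 2 I.card + 1)^(s+1) := rfl

end ML



section GenDefs

/-- Coordinate-wise monotone, over an arbitrary index type. -/
def CoordWiseMonotone' {ι : Type} [DecidableEq ι] {B : ι → Type} {S : Type} [LinearOrder S]
    (f : (∀ i, B i) → S) : Prop :=
  ∀ (i : ι) (x x' : ∀ j, B j) (b b' : B i),
    (f (Function.update x i b) ≤ f (Function.update x i b') ↔
      f (Function.update x' i b) ≤ f (Function.update x' i b'))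

def IsBasicSet' {ι : Type} [DecidableEq ι] {B : ι → Type} (X : Set (∀ i, B i)) : Prop :=
  ∃ (S : Type) (_ : LinearOrder S) (f : (∀ i, B i) → S) (l : S),
    CoordWiseMonotone' f ∧ X = {x | f x < l}

def HasGridComplexity' {ι : Type} [DecidableEq ι] {B : ι → Type}
    (A : Set (∀ i, B i)) (s : ℕ) : Prop :=
  ∃ X : Fin s → Set (∀ i, B i), (∀ j, IsBasicSet' (X j)) ∧ A = ⋂ j, X j

def KkFree' {ι : Type} {B : ι → Type} (A : Set (∀ i, B i)) (k : ℕ) : Prop :=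
  ¬ ∃ C : ∀ i, Finset (B i), (∀ i, (C i).card = k) ∧
      ∀ x : ∀ i, B i, (∀ i, x i ∈ C i) → x ∈ A

def gridDelta' {ι : Type} [DecidableEq ι] [Fintype ι] (B : ι → Type) [∀ i, Fintype (B i)] : ℕ :=
  ∑ i : ι, ∏ j ∈ Finset.univ.erase i, Fintype.card (B j)

end GenDefs

section Transfer

variable {ι : Type} [DecidableEq ι] {B : ι → Type} (i₀ : ι)

/-- Build a point of the grid from the `i₀` coordinate and the rest. -/
def ptAt (b : B i₀) (a : ∀ j : {j // j ≠ i₀}, B j.val) : ∀ i, B i :=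
  (Equiv.piSplitAt i₀ B).symm (b, a)

lemma ptAt_update_left (b b' : B i₀) (a : ∀ j : {j // j ≠ i₀}, B j.val) :
    ptAt i₀ b a = Function.update (ptAt i₀ b' a) i₀ b := by
  funext j
  simp only [ptAt, Equiv.piSplitAt_symm_apply, Function.update]
  split_ifs with h
  · subst h; rfl
  · rfl

lemma ptAt_update_right (b : B i₀) (a : ∀ j : {j // j ≠ i₀}, B j.val)
    (j : {j // j ≠ i₀}) (c : B j.val) :
    ptAt i₀ b (Function.update a j c) = Function.update (ptAt i₀ b a) j.val c := by
  funext j'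
  simp only [ptAt, Equiv.piSplitAt_symm_apply, Function.update]
  by_cases h : j' = i₀
  · subst h
    rw [dif_pos rfl, dif_neg (Ne.symm j.2), dif_pos rfl]
  · rw [dif_neg h, dif_neg h]
    by_cases h2 : j' = j.val
    · have : (⟨j', h⟩ : {j // j ≠ i₀}) = j := Subtype.ext h2
      rw [dif_pos h2, dif_pos this]
      subst h2
      rfl
    · have : (⟨j', h⟩ : {j // j ≠ i₀}) ≠ j := fun hh => h2 (congrArg Subtype.val hh)
      rw [dif_neg h2, dif_neg this]

lemma section_isBasic {X : Set (∀ i, B i)} (hX : IsBasicSet' X) (b : B i₀) :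
    IsBasicSet' (B := fun j : {j // j ≠ i₀} => B j.val) {a | ptAt i₀ b a ∈ X} := by
  obtain ⟨S, instS, f, l, hcwm, hXeq⟩ := hX
  refine ⟨S, instS, fun a => f (ptAt i₀ b a), l, ?_, ?_⟩
  · intro j x x' c c'
    show f (ptAt i₀ b (Function.update x j c)) ≤ f (ptAt i₀ b (Function.update x j c')) ↔
      f (ptAt i₀ b (Function.update x' j c)) ≤ f (ptAt i₀ b (Function.update x' j c'))
    rw [ptAt_update_right, ptAt_update_right, ptAt_update_right, ptAt_update_right]
    exact hcwm j.val _ _ c c'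
  · ext a
    simp [hXeq]

lemma section_chain {X : Set (∀ i, B i)} (hX : IsBasicSet' X) (b b' : B i₀) :
    {a : ∀ j : {j // j ≠ i₀}, B j.val | ptAt i₀ b a ∈ X} ⊆ {a | ptAt i₀ b' a ∈ X} ∨
      {a : ∀ j : {j // j ≠ i₀}, B j.val | ptAt i₀ b' a ∈ X} ⊆ {a | ptAt i₀ b a ∈ X} := by
  obtain ⟨S, instS, f, l, hcwm, hXeq⟩ := hX
  by_contra hcon
  push_neg at hcon
  obtain ⟨hns1, hns2⟩ := hcon
  obtain ⟨a, ha1, ha2⟩ := Set.not_subset.1 hns1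
  obtain ⟨a', hb1, hb2⟩ := Set.not_subset.1 hns2
  rw [Set.mem_setOf_eq, hXeq] at ha1 ha2 hb1 hb2
  simp only [Set.mem_setOf_eq, not_lt] at ha1 ha2 hb1 hb2
  -- ha1 : f (ptAt i₀ b a) < l, ha2 : l ≤ f (ptAt i₀ b' a)
  -- hb1 : f (ptAt i₀ b' a') < l, hb2 : l ≤ f (ptAt i₀ b a')
  have key0 : ¬ (f (ptAt i₀ b' a) ≤ f (ptAt i₀ b a)) := fun hle =>
    absurd ha1 (not_lt.2 (le_trans ha2 hle))
  have e1 : ptAt i₀ b' a = Function.update (ptAt i₀ b a) i₀ b' := ptAt_update_left i₀ b' b a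
  have e2 : ptAt i₀ b a = Function.update (ptAt i₀ b a) i₀ b := ptAt_update_left i₀ b b a
  have e3 : ptAt i₀ b' a' = Function.update (ptAt i₀ b a') i₀ b' := ptAt_update_left i₀ b' b a'
  have e4 : ptAt i₀ b a' = Function.update (ptAt i₀ b a') i₀ b := ptAt_update_left i₀ b b a'
  have hiff := hcwm i₀ (ptAt i₀ b a') (ptAt i₀ b a) b' b
  rw [← e3, ← e4, ← e1, ← e2] at hiff
  exact key0 (hiff.1 (le_trans (le_of_lt hb1) hb2))

lemma chain_min {β : Type} [Finite β] (T : Finset (B i₀)) (hT : T.Nonempty) (g : B i₀ → Set β)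
    (hchain : ∀ b b', g b ⊆ g b' ∨ g b' ⊆ g b) :
    ∃ b₀ ∈ T, ∀ b ∈ T, g b₀ ⊆ g b := by
  obtain ⟨b₀, hb₀T, hb₀min⟩ := Finset.exists_min_image T (fun b => (g b).ncard) hT
  refine ⟨b₀, hb₀T, fun b hb => ?_⟩
  rcases hchain b₀ b with h | h
  · exact h
  · exact (Set.eq_of_subset_of_ncard_le h (hb₀min b hb) (Set.toFinite _)).symm.subset

end Transfer


section DeltaLemmas

variable {ι : Type} [DecidableEq ι] [Fintype ι]

lemma delta_split (B : ι → Type) [∀ i, Fintype (B i)] (i₀ : ι) :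
    gridDelta' B = Fintype.card (∀ j : {j // j ≠ i₀}, B j.val) +
      Fintype.card (B i₀) * gridDelta' (fun j : {j // j ≠ i₀} => B j.val) := by
  classical
  have hN : Fintype.card (∀ j : {j // j ≠ i₀}, B j.val)
      = ∏ j ∈ Finset.univ.erase i₀, Fintype.card (B j) := by
    rw [Fintype.card_pi]
    exact (Finset.prod_subtype (Finset.univ.erase i₀)
      (fun j => by simp [Finset.mem_erase]) (fun j => Fintype.card (B j))).symm
  have hterm : ∀ j : {j // j ≠ i₀},
      Fintype.card (B i₀) * ∏ i ∈ Finset.univ.erase j, Fintype.card (B i.val)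
        = ∏ i ∈ Finset.univ.erase (j : ι), Fintype.card (B i) := by
    intro j
    have hmap : (Finset.univ.erase j).map ⟨Subtype.val, Subtype.val_injective⟩
        = (Finset.univ.erase (j : ι)).erase i₀ := by
      ext x
      simp only [Finset.mem_map, Finset.mem_erase, Finset.mem_univ, and_true,
        Function.Embedding.coeFn_mk]
      constructor
      · rintro ⟨a, ha, rfl⟩
        exact ⟨a.2, fun hh => ha (Subtype.ext hh)⟩
      · rintro ⟨h1, h2⟩
        exact ⟨⟨x, h1⟩, fun hh => h2 (congrArg Subtype.val hh), rfl⟩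
    calc Fintype.card (B i₀) * ∏ i ∈ Finset.univ.erase j, Fintype.card (B i.val)
        = Fintype.card (B i₀) *
            ∏ i ∈ (Finset.univ.erase j).map ⟨Subtype.val, Subtype.val_injective⟩,
              Fintype.card (B i) := by rw [Finset.prod_map]; rfl
      _ = Fintype.card (B i₀) * ∏ i ∈ (Finset.univ.erase (j : ι)).erase i₀,
              Fintype.card (B i) := by rw [hmap]
      _ = ∏ i ∈ Finset.univ.erase (j : ι), Fintype.card (B i) :=
          Finset.mul_prod_erase (Finset.univ.erase (j : ι)) (fun i => Fintype.card (B i))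
            (Finset.mem_erase.2 ⟨Ne.symm j.2, Finset.mem_univ _⟩)
  unfold gridDelta'
  rw [← Finset.add_sum_erase Finset.univ _ (Finset.mem_univ i₀)]
  congr 1
  · exact hN.symm
  · calc ∑ i ∈ Finset.univ.erase i₀, ∏ j ∈ Finset.univ.erase i, Fintype.card (B j)
        = ∑ j : {j // j ≠ i₀}, ∏ i ∈ Finset.univ.erase (j : ι), Fintype.card (B i) :=
          Finset.sum_subtype (Finset.univ.erase i₀)
            (fun j => by simp [Finset.mem_erase])
            (fun i => ∏ j ∈ Finset.univ.erase i, Fintype.card (B j))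
      _ = ∑ j : {j // j ≠ i₀},
            Fintype.card (B i₀) * ∏ i ∈ Finset.univ.erase j, Fintype.card (B i.val) :=
          Finset.sum_congr rfl (fun j _ => (hterm j).symm)
      _ = Fintype.card (B i₀) *
            ∑ j : {j // j ≠ i₀}, ∏ i ∈ Finset.univ.erase j, Fintype.card (B i.val) :=
          (Finset.mul_sum _ _ _).symm

lemma one_le_delta [Nonempty ι] (B : ι → Type) [∀ i, Fintype (B i)]
    (hpos : ∀ i, 1 ≤ Fintype.card (B i)) : 1 ≤ gridDelta' B := by
  obtain ⟨i⟩ := ‹Nonempty ι›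
  refine le_trans ?_ (Finset.single_le_sum
    (f := fun i => ∏ j ∈ Finset.univ.erase i, Fintype.card (B j))
    (fun _ _ => Nat.zero_le _) (Finset.mem_univ i))
  exact Finset.one_le_prod' (fun j _ => hpos j)

end DeltaLemmas

section GenTheorem

theorem GEN : ∀ (n s k : ℕ), 2 ≤ k → ∃ Cst : ℕ, 1 ≤ Cst ∧
    ∀ (ι : Type) [DecidableEq ι] [Fintype ι], Fintype.card ι = n →
    ∀ (B : ι → Type) [∀ i, Fintype (B i)] (A : Set (∀ i, B i)),
      HasGridComplexity' A s → KkFree' A k →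
      A.ncard ≤ Cst * gridDelta' B * (Nat.clog 2 (gridDelta' B) + 1)^((n-1)*s) := by
  intro n
  induction n with
  | zero =>
    intro s k hk
    refine ⟨1, le_rfl, ?_⟩
    intro ι _ _ hcard B _ A hcx hfree
    have hempty : IsEmpty ι := Fintype.card_eq_zero_iff.1 hcard
    rcases A.eq_empty_or_nonempty with rfl | ⟨x, hx⟩
    · simp
    · exfalso
      refine hfree ⟨fun i => isEmptyElim i, fun i => isEmptyElim i, fun y _ => ?_⟩
      have : y = x := funext (fun i => isEmptyElim i)
      rwa [this]
  | succ n ihn =>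
    rcases Nat.eq_zero_or_pos n with rfl | hn
    · -- one coordinate
      intro s k hk
      refine ⟨k, by omega, ?_⟩
      intro ι _ _ hcard B _ A hcx hfree
      classical
      obtain ⟨i₀, hi₀⟩ := Fintype.card_eq_one_iff.1 hcard
      have hδ : gridDelta' B = 1 := by
        have huniv : (Finset.univ : Finset ι) = {i₀} := by
          ext j; simp [hi₀ j]
        unfold gridDelta'
        rw [huniv]
        simp
      have hcard' : A.ncard ≤ k - 1 := by
        by_contra hcon
        push_neg at hcon
        have hk' : k ≤ A.ncard := by omega
        have hfin : A.Finite := Set.toFinite A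
        have hAcard : A.ncard = hfin.toFinset.card := Set.ncard_eq_toFinset_card A hfin
        obtain ⟨F, hFsub, hFcard⟩ := Finset.exists_subset_card_eq
          (s := hfin.toFinset) (n := k) (by omega)
        have hinj : ∀ i : ι, Function.Injective (fun x : (∀ i, B i) => x i) := by
          intro i x y hxy
          funext j
          have hj : j = i := (hi₀ j).trans (hi₀ i).symm
          subst hj; exact hxy
        refine hfree ⟨fun i => F.image (fun x => x i), fun i => ?_, fun x hx => ?_⟩
        · rw [Finset.card_image_of_injective F (hinj i), hFcard]
        · have hxi := hx i₀
          simp only [Finset.mem_image] at hxi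
          obtain ⟨y, hyF, hyx⟩ := hxi
          have hxy : x = y := by
            funext j
            have hj : j = i₀ := hi₀ j
            subst hj
            exact hyx.symm
          rw [hxy]
          have := hFsub hyF
          rwa [Set.Finite.mem_toFinset] at this
      rw [hδ]
      calc A.ncard ≤ k - 1 := hcard'
        _ ≤ k * 1 * (Nat.clog 2 1 + 1)^((1-1)*s) := by simp
    · -- generic step, n ≥ 1
      intro s k hk
      obtain ⟨Cst', hCst'1, IH⟩ := ihn s k hk
      have hCst : 1 ≤ (k-1) * (Cst' + 1) := by
        have : 1*1 ≤ (k-1) * (Cst'+1) := Nat.mul_le_mul (by omega) (by omega)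
        omega
      refine ⟨(k-1) * (Cst' + 1), hCst, ?_⟩
      intro ι instD instF hcard B instB A hcx hkfA
      by_cases hzero : ∃ i, Fintype.card (B i) = 0
      · obtain ⟨i, hi⟩ := hzero
        have hA0 : A.ncard = 0 := by
          have hcards : Fintype.card (∀ i, B i) = 0 := by
            rw [Fintype.card_pi]
            exact Finset.prod_eq_zero (Finset.mem_univ i) hi
          have := Set.ncard_le_ncard (Set.subset_univ A) (Set.toFinite _)
          rwa [Set.ncard_univ, Nat.card_eq_fintype_card, hcards, Nat.le_zero] at this
        rw [hA0]; exact Nat.zero_le _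
      push_neg at hzero
      have hpos : ∀ i, 1 ≤ Fintype.card (B i) := fun i => Nat.one_le_iff_ne_zero.2 (hzero i)
      have hne : Nonempty ι := Fintype.card_pos_iff.1 (by omega)
      obtain ⟨i₀⟩ := hne
      set B' : {j // j ≠ i₀} → Type := fun j => B j.val with hB'
      have hcard' : Fintype.card {j // j ≠ i₀} = n := by
        have h2 := Fintype.card_subtype_compl (p := fun j => j = i₀)
        rw [Fintype.card_subtype_eq, hcard] at h2
        simpa using h2
      set δ := gridDelta' B with hδdef
      set δ' := gridDelta' B' with hδ'def
      set m := Fintype.card (B i₀) with hm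
      set N' := Fintype.card (∀ j : {j // j ≠ i₀}, B' j) with hN'
      have hsplit : δ = N' + m * δ' := delta_split B i₀
      have hne' : Nonempty {j // j ≠ i₀} := by
        rw [← Fintype.card_pos_iff, hcard']; omega
      have hδ'1 : 1 ≤ δ' := one_le_delta B' (fun j => hpos j.val)
      have hm1 : 1 ≤ m := hpos i₀
      have hmδ : m ≤ δ := by
        have h3 : m * 1 ≤ m * δ' := Nat.mul_le_mul_left m hδ'1
        omega
      have hδ'δ : δ' ≤ δ := by
        have h3 : 1 * δ' ≤ m * δ' := Nat.mul_le_mul_right δ' hm1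
        omega
      obtain ⟨X, hXbasic, hAeq⟩ := hcx
      set sect : Fin s → B i₀ → Set (∀ j : {j // j ≠ i₀}, B' j) :=
        fun j b => {a | ptAt i₀ b a ∈ X j} with hsect
      have hchain : ∀ j b b', sect j b ⊆ sect j b' ∨ sect j b' ⊆ sect j b :=
        fun j b b' => section_chain i₀ (hXbasic j) b b'
      set G := Cst' * δ' * (Nat.clog 2 δ' + 1)^((n-1)*s) with hG
      have hmem : ∀ (a : ∀ j : {j // j ≠ i₀}, B' j) (b : B i₀),
          ((a, b) ∈ MLset s sect Set.univ Finset.univ ↔ ptAt i₀ b a ∈ A) := by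
        intro a b
        constructor
        · rintro ⟨-, -, h3⟩
          rw [hAeq]
          exact Set.mem_iInter.2 (fun j => h3 j)
        · intro h
          refine ⟨trivial, Finset.mem_univ b, fun j => ?_⟩
          rw [hAeq] at h
          exact Set.mem_iInter.1 h j
      have hfreeML : ∀ T : Finset (B i₀), T.card = k →
          {a | ∀ b ∈ T, (a, b) ∈ MLset s sect Set.univ Finset.univ}.ncard ≤ G := by
        intro T hT
        have hTne : T.Nonempty := Finset.card_pos.1 (by omega)
        have hmin : ∀ j : Fin s, ∃ b₀ ∈ T, ∀ b ∈ T, sect j b₀ ⊆ sect j b :=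
          fun j => chain_min i₀ T hTne (sect j) (hchain j)
        choose bmin hbminT hbminmin using hmin
        set Z : Set (∀ j : {j // j ≠ i₀}, B' j) :=
          {a | ∀ b ∈ T, (a, b) ∈ MLset s sect Set.univ Finset.univ} with hZ
        have hZeq : Z = ⋂ j : Fin s, sect j (bmin j) := by
          ext a
          simp only [hZ, Set.mem_setOf_eq, Set.mem_iInter]
          constructor
          · intro ha j
            have h1 := (hmem a (bmin j)).1 (ha (bmin j) (hbminT j))
            rw [hAeq] at h1
            exact Set.mem_iInter.1 h1 j
          · intro ha b hb
            refine (hmem a b).2 ?_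
            rw [hAeq]
            exact Set.mem_iInter.2 (fun j => hbminmin j b hb (ha j))
        have hZcx : HasGridComplexity' (B := B') Z s :=
          ⟨fun j => sect j (bmin j), fun j => section_isBasic i₀ (hXbasic j) (bmin j), hZeq⟩
        have hZfree : KkFree' Z k := by
          rintro ⟨C', hC'card, hC'grid⟩
          set CC : ∀ i : ι, Finset (B i) :=
            fun i => if h : i = i₀ then (h.symm ▸ T) else C' ⟨i, h⟩ with hCC
          have hCCne : ∀ (i : ι) (h : i ≠ i₀), CC i = C' ⟨i, h⟩ := fun i h => dif_neg h
          have hCCeq : CC i₀ = T := dif_pos rfl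
          refine hkfA ⟨CC, fun i => ?_, fun x hx => ?_⟩
          · by_cases h : i = i₀
            · subst h; rw [hCCeq]; exact hT
            · rw [hCCne i h]; exact hC'card ⟨i, h⟩
          · set a : ∀ j : {j // j ≠ i₀}, B' j := fun j => x j.val with ha
            have haZ : a ∈ Z := by
              apply hC'grid
              intro j
              have hxj := hx j.val
              rw [hCCne j.val j.2] at hxj
              simpa using hxj
            have hbT : x i₀ ∈ T := by
              have hxi := hx i₀
              rwa [hCCeq] at hxi
            have hmm := (hmem a (x i₀)).1 (haZ (x i₀) hbT)
            have hxeq : ptAt i₀ (x i₀) a = x := by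
              funext i
              simp only [ptAt, Equiv.piSplitAt_symm_apply]
              split_ifs with h
              · subst h; rfl
              · rfl
            rwa [hxeq] at hmm
        have hIH := IH {j // j ≠ i₀} hcard' B' Z hZcx hZfree
        exact hIH
      set Φ : (∀ i, B i) ≃ ((∀ j : {j // j ≠ i₀}, B' j) × B i₀) :=
        (Equiv.piSplitAt i₀ B).trans (Equiv.prodComm _ _) with hΦ
      have himg : Φ '' A = MLset s sect Set.univ Finset.univ := by
        ext x
        obtain ⟨a, b⟩ := x
        constructor
        · rintro ⟨y, hyA, hy⟩
          have hyx : y = ptAt i₀ b a := by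
            have h1 := Φ.symm_apply_apply y
            rw [hy] at h1
            exact h1.symm
          refine (hmem a b).2 ?_
          rw [← hyx]
          exact hyA
        · intro hmem2
          refine ⟨ptAt i₀ b a, (hmem a b).1 hmem2, ?_⟩
          show Φ ((Equiv.piSplitAt i₀ B).symm (b, a)) = (a, b)
          rw [hΦ]
          simp [Equiv.trans_apply]
      have hncard : A.ncard = (MLset s sect Set.univ Finset.univ).ncard := by
        rw [← himg, Set.ncard_image_of_injective A Φ.injective]
      have hML := ML k G hk s sect hchain Set.univ Finset.univ hfreeML
      have huniv1 : (Set.univ : Set (∀ j : {j // j ≠ i₀}, B' j)).ncard = N' := by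
        rw [Set.ncard_univ, Nat.card_eq_fintype_card]
      have huniv2 : (Finset.univ : Finset (B i₀)).card = m := Finset.card_univ
      rw [huniv1, huniv2] at hML
      rw [hncard]
      -- arithmetic
      set c := Nat.clog 2 δ with hc
      have hclogm : Nat.clog 2 m ≤ c := Nat.clog_mono_right _ hmδ
      have hclogδ' : Nat.clog 2 δ' ≤ c := Nat.clog_mono_right _ hδ'δ
      have hexp : (n-1)*s + s = n*s := by
        have : n - 1 + 1 = n := by omega
        calc (n-1)*s + s = ((n-1)+1)*s := by ring
          _ = n*s := by rw [this]
      calc (MLset s sect Set.univ Finset.univ).ncard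
          ≤ (k-1) * (N' + m * G) * (Nat.clog 2 m + 1)^s := hML
        _ ≤ (k-1) * ((Cst'+1) * δ * (c+1)^((n-1)*s)) * (c+1)^s := by
            have step1 : N' + m * G ≤ (Cst'+1) * δ * (c+1)^((n-1)*s) := by
              have e1 : m * G ≤ Cst' * (m * δ') * (c+1)^((n-1)*s) := by
                rw [hG]
                calc m * (Cst' * δ' * (Nat.clog 2 δ' + 1)^((n-1)*s))
                    = Cst' * (m * δ') * (Nat.clog 2 δ' + 1)^((n-1)*s) := by ring
                  _ ≤ Cst' * (m * δ') * (c+1)^((n-1)*s) := by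
                      gcongr <;> omega
              have e2 : N' ≤ N' * (c+1)^((n-1)*s) := by
                have : 1 ≤ (c+1)^((n-1)*s) := Nat.one_le_pow _ _ (by omega)
                calc N' = N' * 1 := (Nat.mul_one _).symm
                  _ ≤ N' * (c+1)^((n-1)*s) := Nat.mul_le_mul_left _ this
              calc N' + m * G ≤ N' * (c+1)^((n-1)*s) + Cst' * (m * δ') * (c+1)^((n-1)*s) := by
                    omega
                _ = (N' + Cst' * (m * δ')) * (c+1)^((n-1)*s) := by ring
                _ ≤ ((Cst'+1) * δ) * (c+1)^((n-1)*s) := by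
                    have : N' + Cst' * (m * δ') ≤ (Cst'+1) * δ := by
                      rw [hsplit]; ring_nf; nlinarith [Nat.zero_le (Cst' * N')]
                    exact Nat.mul_le_mul_right _ this
            gcongr <;> omega
        _ = (k-1) * (Cst'+1) * δ * ((c+1)^((n-1)*s) * (c+1)^s) := by ring
        _ = (k-1) * (Cst'+1) * δ * (c+1)^(n*s) := by
            rw [← pow_add, hexp]
        _ = (k-1) * (Cst'+1) * δ * (Nat.clog 2 δ + 1)^((n+1-1)*s) := by
            simp only [Nat.add_sub_cancel, hc]
    
end GenTheorem

/-- Coordinate-wise monotone function on an `r`-grid. -/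
def CoordWiseMonotone {r : ℕ} {B : Fin r → Type} {S : Type} [LinearOrder S]
    (f : (∀ i, B i) → S) : Prop :=
  ∀ (i : Fin r) (x x' : ∀ j, B j) (b b' : B i),
    (f (Function.update x i b) ≤ f (Function.update x i b') ↔
      f (Function.update x' i b) ≤ f (Function.update x' i b'))

/-- A basic subset of an `r`-grid. -/
def IsBasicSet {r : ℕ} {B : Fin r → Type} (X : Set (∀ i, B i)) : Prop :=
  ∃ (S : Type) (_ : LinearOrder S) (f : (∀ i, B i) → S) (l : S),
    CoordWiseMonotone f ∧ X = {x | f x < l}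

/-- `A` has grid-complexity `s`: it is the intersection of the grid with
(at most) `s` basic sets. -/
def HasGridComplexity {r : ℕ} {B : Fin r → Type} (A : Set (∀ i, B i)) (s : ℕ) : Prop :=
  ∃ X : Fin s → Set (∀ i, B i), (∀ j, IsBasicSet (X j)) ∧ A = ⋂ j, X j

/-- `A ⊆ B₁ × ⋯ × B_r` is `K_{k,…,k}`-free: it contains no sub-grid `C₁ × ⋯ × C_r`
with `|C_i| = k` for all `i`. -/
def KkFree {r : ℕ} {B : Fin r → Type} (A : Set (∀ i, B i)) (k : ℕ) : Prop :=
  ¬ ∃ C : ∀ i, Finset (B i), (∀ i, (C i).card = k) ∧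
      ∀ x : ∀ i, B i, (∀ i, x i ∈ C i) → x ∈ A

/-- `δ^r_{r-1}(B) = Σ_{i ∈ [r]} Π_{j ≠ i} |B_j|` for a finite `r`-grid. -/
def gridDelta {r : ℕ} (B : Fin r → Type) [∀ i, Fintype (B i)] : ℕ :=
  ∑ i : Fin r, ∏ j ∈ Finset.univ.erase i, Fintype.card (B j)

section Bridge

lemma bridge_cwm {r : ℕ} {B : Fin r → Type} {S : Type} [LinearOrder S]
    (f : (∀ i, B i) → S) (h : CoordWiseMonotone f) : CoordWiseMonotone' f := h

lemma bridge_complexity {r : ℕ} {B : Fin r → Type} (A : Set (∀ i, B i)) (s : ℕ)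
    (h : HasGridComplexity A s) : HasGridComplexity' A s := by
  obtain ⟨X, hX, hAeq⟩ := h
  exact ⟨X, fun j => by
    obtain ⟨S, inst, f, l, hf, heq⟩ := hX j
    exact ⟨S, inst, f, l, bridge_cwm f hf, heq⟩, hAeq⟩

lemma bridge_kkfree {r : ℕ} {B : Fin r → Type} (A : Set (∀ i, B i)) (k : ℕ)
    (h : KkFree A k) : KkFree' A k := h

lemma bridge_delta {r : ℕ} (B : Fin r → Type) [∀ i, Fintype (B i)] :
    gridDelta B = gridDelta' B := rfl

end Bridge

/-- Zarankiewicz bound for `K_{k,…,k}`-free subsets of grid-complexity `s` of a finite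
`r`-grid: `|A| ≤ α · δ^r_{r-1}(B) · log^{s(2^{r-1}-1)}(δ^r_{r-1}(B) + 1)`. -/
theorem main_zarankiewicz_bound (r s k : ℕ) (hr : 2 ≤ r) (hk : 2 ≤ k) :
    ∃ α : ℝ, ∀ (B : Fin r → Type) [∀ i, Fintype (B i)] (A : Set (∀ i, B i)),
      HasGridComplexity A s → KkFree A k →
      (A.ncard : ℝ) ≤ α * (gridDelta B : ℝ) *
        Real.log ((gridDelta B : ℝ) + 1) ^ (s * (2 ^ (r - 1) - 1)) := by
  obtain ⟨Cst, hCst1, HG⟩ := GEN r s k hk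
  refine ⟨(Cst : ℝ) * (4:ℝ)^((r-1)*s), ?_⟩
  intro B instB A hcx hkf
  have hnat : A.ncard ≤ Cst * gridDelta B * (Nat.clog 2 (gridDelta B) + 1)^((r-1)*s) := by
    have := HG (Fin r) (Fintype.card_fin r) B A (bridge_complexity A s hcx)
      (bridge_kkfree A k hkf)
    rwa [← bridge_delta] at this
  set δ := gridDelta B with hδdef
  have hδ1 : (0:ℝ) ≤ Real.log ((δ:ℝ) + 1) := Real.log_nonneg (by
    have : (0:ℝ) ≤ (δ:ℝ) := Nat.cast_nonneg δ
    linarith)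
  rcases A.eq_empty_or_nonempty with rfl | ⟨x, hx⟩
  · rw [Set.ncard_empty]
    push_cast
    positivity
  · have hpos : ∀ i, 1 ≤ Fintype.card (B i) := fun i =>
      Fintype.card_pos_iff.2 ⟨x i⟩
    have hδ2 : 2 ≤ δ := by
      calc 2 ≤ r := hr
        _ = ∑ _i : Fin r, 1 := by simp
        _ ≤ ∑ i : Fin r, ∏ j ∈ Finset.univ.erase i, Fintype.card (B j) :=
            Finset.sum_le_sum (fun i _ => Finset.one_le_prod' (fun j _ => hpos j))
    have hlog1 : (1:ℝ) ≤ Real.log ((δ:ℝ) + 1) := by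
      rw [Real.le_log_iff_exp_le (by positivity)]
      have h3 : (3:ℝ) ≤ (δ:ℝ) + 1 := by
        have : (2:ℝ) ≤ (δ:ℝ) := by exact_mod_cast hδ2
        linarith
      calc Real.exp 1 ≤ 2.7182818286 := Real.exp_one_lt_d9.le
        _ ≤ 3 := by norm_num
        _ ≤ (δ:ℝ) + 1 := h3
    have hclog : ((Nat.clog 2 δ + 1 : ℕ) : ℝ) ≤ 4 * Real.log ((δ:ℝ)+1) := by
      set c := Nat.clog 2 δ with hcdef
      have hc1 : 1 ≤ c := Nat.clog_pos one_lt_two hδ2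
      have h2c : 2^(c-1) < δ := Nat.pow_pred_clog_lt_self one_lt_two (by omega)
      have hr1 : ((c:ℝ)-1) * Real.log 2 ≤ Real.log ((δ:ℝ)+1) := by
        have h1 : ((2:ℝ))^(c-1 : ℕ) ≤ (δ:ℝ)+1 := by
          have h0 : (2^(c-1) : ℕ) ≤ δ := le_of_lt h2c
          calc ((2:ℝ))^(c-1:ℕ) = ((2^(c-1):ℕ):ℝ) := by push_cast; ring
            _ ≤ (δ:ℝ) := by exact_mod_cast h0
            _ ≤ (δ:ℝ)+1 := by linarith
        have h2 := Real.log_le_log (by positivity) h1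
        rw [Real.log_pow] at h2
        have hcast : ((c-1:ℕ):ℝ) = (c:ℝ)-1 := by
          rw [Nat.cast_sub hc1]; norm_num
        rwa [hcast] at h2
      have hlog2 : (0.6931471803:ℝ) < Real.log 2 := Real.log_two_gt_d9
      have hlog2' : Real.log 2 ≤ 1 := by
        have := Real.log_le_sub_one_of_pos (x := 2) (by norm_num)
        linarith
      push_cast
      nlinarith [hlog1, hr1, hlog2]
    have hEβ : (r-1)*s ≤ s * (2^(r-1) - 1) := by
      have h1 : r - 1 ≤ 2^(r-1) - 1 := by
        have := @Nat.lt_two_pow_self (r-1)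
        omega
      calc (r-1)*s = s*(r-1) := Nat.mul_comm _ _
        _ ≤ s*(2^(r-1)-1) := Nat.mul_le_mul_left _ h1
    calc (A.ncard : ℝ)
        ≤ (Cst : ℝ) * (δ:ℝ) * ((Nat.clog 2 δ + 1 : ℕ):ℝ)^((r-1)*s) := by
          exact_mod_cast hnat
      _ ≤ (Cst:ℝ) * (δ:ℝ) * (4 * Real.log ((δ:ℝ)+1))^((r-1)*s) := by
          refine mul_le_mul_of_nonneg_left ?_ (by positivity)
          exact pow_le_pow_left₀ (by positivity) hclog _
      _ = (Cst:ℝ) * (4:ℝ)^((r-1)*s) * (δ:ℝ) * (Real.log ((δ:ℝ)+1))^((r-1)*s) := by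
          rw [mul_pow]; ring
      _ ≤ (Cst:ℝ) * (4:ℝ)^((r-1)*s) * (δ:ℝ) * (Real.log ((δ:ℝ)+1))^(s*(2^(r-1)-1)) := by
          refine mul_le_mul_of_nonneg_left ?_ (by positivity)
          exact pow_le_pow_right₀ hlog1 hEβ
end

section
/- For all integers r ≥ 3, t ≥ 0, u ≥ 0, k ≥ 2 there exist α' = α'(r, k, t, u) ∈ ℝ and β' = β'(r, t, u) ∈ ℕ such that: for any finite r-grid B and any K_{k,…,k}-free subset A ⊆ B of split grid-complexity (t, u), one has |A| ≤ α' · δ^r_{r-1}(B) · log^{β'}(δ^r_{r-1}(B) + 1). -/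
/-- `A` has split grid-complexity `(t, u)` in the `(m+1)`-grid `B`: there are basic sets
`X₁, …, X_u ⊆ B`, a subset `A^r` of the `m`-grid `B₁ × ⋯ × B_m` of grid-complexity `t`,
and a subset `A_r ⊆ B_{m+1}` such that `A = (A^r × A_r) ∩ X₁ ∩ ⋯ ∩ X_u`. -/
def HasSplitGridComplexity {m : ℕ} {B : Fin (m + 1) → Type}
    (A : Set (∀ i, B i)) (t u : ℕ) : Prop :=
  ∃ (X : Fin u → Set (∀ i, B i)) (Ar : Set (∀ i : Fin m, B i.castSucc))
    (Al : Set (B (Fin.last m))),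
    (∀ j, IsBasicSet (X j)) ∧ HasGridComplexity Ar t ∧
    A = {x : ∀ i, B i | (fun i : Fin m => x i.castSucc) ∈ Ar ∧ x (Fin.last m) ∈ Al} ∩ ⋂ j, X j

section Helpers

variable {r : ℕ} {B : Fin r → Type}

lemma isBasicSet_univ : IsBasicSet (Set.univ : Set (∀ i, B i)) := by
  refine ⟨Bool, inferInstance, fun _ => false, true, ?_, ?_⟩
  · intro i x x' b b'; simp
  · ext x; simp

lemma IsBasicSet.compl {X : Set (∀ i, B i)} (h : IsBasicSet X) : IsBasicSet Xᶜ := by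
  obtain ⟨S, _, f, l, hf, rfl⟩ := h
  refine ⟨Lex (Sᵒᵈ × Bool), inferInstance,
    fun x => toLex (OrderDual.toDual (f x), false), toLex (OrderDual.toDual l, true), ?_, ?_⟩
  · intro i x x' b b'
    have key : ∀ y z : ∀ j, B j,
        (toLex (OrderDual.toDual (f y), false) ≤ toLex (OrderDual.toDual (f z), false)) ↔
          f z ≤ f y := by
      intro y z
      rw [Prod.Lex.le_iff]
      constructor
      · rintro (h | ⟨h, -⟩)
        · exact le_of_lt h
        · exact le_of_eq (congrArg OrderDual.ofDual h).symm
      · intro h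
        rcases lt_or_eq_of_le h with h' | h'
        · exact Or.inl h'
        · exact Or.inr ⟨congrArg OrderDual.toDual h'.symm, le_refl _⟩
    rw [key, key]
    exact hf i x x' b' b
  · ext x
    simp only [Set.mem_compl_iff, Set.mem_setOf_eq, not_lt]
    rw [Prod.Lex.lt_iff]
    constructor
    · intro h
      rcases lt_or_eq_of_le h with h' | h'
      · exact Or.inl h'
      · exact Or.inr ⟨congrArg OrderDual.toDual h'.symm, Bool.false_lt_true⟩
    · rintro (h | ⟨h, -⟩)
      · exact le_of_lt h
      · exact le_of_eq (congrArg OrderDual.ofDual h).symm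

lemma iInter_fin_succ {n : ℕ} (g : Fin (n + 1) → Set (∀ i, B i)) :
    (⋂ j, g j) = (⋂ j : Fin n, g j.castSucc) ∩ g (Fin.last n) := by
  ext x
  simp only [Set.mem_iInter, Set.mem_inter_iff]
  exact ⟨fun h => ⟨fun j => h _, h _⟩, fun ⟨h1, h2⟩ j => Fin.lastCases h2 h1 j⟩

lemma HasGridComplexity.inter_basic {A : Set (∀ i, B i)} {s : ℕ}
    (hA : HasGridComplexity A s) {Z : Set (∀ i, B i)} (hZ : IsBasicSet Z) :
    HasGridComplexity (A ∩ Z) (s + 1) := by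
  obtain ⟨X, hX, rfl⟩ := hA
  refine ⟨Fin.snoc X Z, ?_, ?_⟩
  · intro j
    refine Fin.lastCases ?_ ?_ j
    · rw [Fin.snoc_last]; exact hZ
    · intro j; rw [Fin.snoc_castSucc]; exact hX j
  · rw [iInter_fin_succ (Fin.snoc X Z), Fin.snoc_last]
    congr 1
    exact Set.iInter_congr fun j => by rw [Fin.snoc_castSucc]

lemma HasGridComplexity.succ {A : Set (∀ i, B i)} {s : ℕ}
    (hA : HasGridComplexity A s) : HasGridComplexity A (s + 1) := by
  have := hA.inter_basic isBasicSet_univ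
  rwa [Set.inter_univ] at this

lemma HasGridComplexity.mono {A : Set (∀ i, B i)} {s s' : ℕ}
    (hA : HasGridComplexity A s) (h : s ≤ s') : HasGridComplexity A s' := by
  induction h with
  | refl => exact hA
  | step _ ih => exact ih.succ

lemma hasGridComplexity_univ_zero : HasGridComplexity (Set.univ : Set (∀ i, B i)) 0 :=
  ⟨Fin.elim0, fun j => j.elim0, by simp⟩

lemma KkFree.mono {A A' : Set (∀ i, B i)} {k : ℕ} (h : KkFree A k) (hsub : A' ⊆ A) :
    KkFree A' k := by
  rintro ⟨C, hC, hbox⟩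
  exact h ⟨C, hC, fun x hx => hsub (hbox x hx)⟩

end Helpers

section Part2

variable {d : ℕ} {B : Fin (d + 1) → Type}

/-- The `d`-grid obtained by dropping the last factor. -/
abbrev initGrid (B : Fin (d + 1) → Type) := ∀ i : Fin d, B i.castSucc

def prodSet (R : Set (initGrid B)) (T : Set (B (Fin.last d))) : Set (∀ i, B i) :=
  {x | (fun i : Fin d => x i.castSucc) ∈ R ∧ x (Fin.last d) ∈ T}

lemma ncard_prodSet [∀ i, Fintype (B i)] (R : Set (initGrid B)) (T : Set (B (Fin.last d))) :
    (prodSet R T).ncard = R.ncard * T.ncard := by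
  classical
  set g : (∀ i, B i) → (initGrid B) × B (Fin.last d) :=
    fun x => (fun i : Fin d => x i.castSucc, x (Fin.last d)) with hg
  have hinj : Function.Injective g := by
    intro x y h
    obtain ⟨h1, h2⟩ := Prod.ext_iff.mp h
    funext i
    refine Fin.lastCases ?_ ?_ i
    · exact h2
    · intro j; exact congrFun h1 j
  have himg : g '' prodSet R T = R ×ˢ T := by
    ext p
    constructor
    · rintro ⟨x, hx, rfl⟩; exact ⟨hx.1, hx.2⟩
    · rintro ⟨h1, h2⟩
      refine ⟨Fin.snoc p.1 p.2, ⟨?_, ?_⟩, ?_⟩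
      · have : (fun i : Fin d => Fin.snoc p.1 p.2 i.castSucc) = p.1 := by
          funext i; exact Fin.snoc_castSucc ..
        rwa [this]
      · rw [Fin.snoc_last]; exact h2
      · refine Prod.ext ?_ ?_
        · funext i; exact Fin.snoc_castSucc ..
        · exact Fin.snoc_last ..
  have h1 : (prodSet R T).ncard = (R ×ˢ T).ncard := by
    rw [← himg, Set.ncard_image_of_injective _ hinj]
  rw [h1, ← Nat.card_coe_set_eq, Nat.card_congr (Equiv.Set.prod R T), Nat.card_prod,
    Nat.card_coe_set_eq, Nat.card_coe_set_eq]

lemma ncard_le_fintypeCard {γ : Type} [Fintype γ] (A : Set γ) :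
    A.ncard ≤ Fintype.card γ := by
  have := Set.ncard_le_ncard (Set.subset_univ A) (Set.toFinite _)
  rwa [Set.ncard_univ, Nat.card_eq_fintype_card] at this

lemma kkfree_left {k : ℕ} [∀ i, Fintype (B i)] {R : Set (initGrid B)}
    {T : Set (B (Fin.last d))}
    (hfree : KkFree (prodSet R T) k) (hT : k ≤ T.ncard) : KkFree R k := by
  rintro ⟨C, hC, hbox⟩
  classical
  have hTfin : T.Finite := Set.toFinite T
  have hcard : k ≤ hTfin.toFinset.card := by
    rwa [← Set.ncard_eq_toFinset_card T hTfin]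
  obtain ⟨Cl, hClsub, hClcard⟩ := Finset.exists_subset_card_eq hcard
  refine hfree ⟨fun i => Fin.lastCases (motive := fun i => Finset (B i)) Cl C i, ?_, ?_⟩
  · intro i
    refine Fin.lastCases ?_ ?_ i
    · simp only [Fin.lastCases_last]; exact hClcard
    · intro j; simp only [Fin.lastCases_castSucc]; exact hC j
  · intro x hx
    constructor
    · apply hbox
      intro j
      have := hx j.castSucc
      simpa only [Fin.lastCases_castSucc] using this
    · have := hx (Fin.last d)
      simp only [Fin.lastCases_last] at this
      exact hTfin.mem_toFinset.mp (hClsub this)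

lemma kkfree_dim_zero {B₁ : Fin 1 → Type} [∀ i, Fintype (B₁ i)] {A : Set (∀ i, B₁ i)}
    {k : ℕ} (hfree : KkFree A k) : A.ncard < k ∨ k = 0 := by
  classical
  rcases Nat.eq_zero_or_pos k with hk | hk
  · exact Or.inr hk
  left
  by_contra hcon
  push_neg at hcon
  have hAfin : A.Finite := Set.toFinite A
  have hcard : k ≤ hAfin.toFinset.card := by
    rwa [← Set.ncard_eq_toFinset_card A hAfin]
  obtain ⟨G, hGsub, hGcard⟩ := Finset.exists_subset_card_eq hcard
  have hinj : Function.Injective (fun x : ∀ i, B₁ i => x 0) := by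
    intro x y h
    funext i
    have : i = 0 := Subsingleton.elim i 0
    subst this
    exact h
  refine hfree ⟨fun i => Fin.cases (motive := fun i => Finset (B₁ i))
    (G.image fun x => x 0) (fun j => j.elim0) i, ?_, ?_⟩
  · intro i
    refine Fin.cases ?_ (fun j => j.elim0) i
    simp only [Fin.cases_zero]
    rw [Finset.card_image_of_injective _ hinj, hGcard]
  · intro x hx
    have := hx 0
    simp only [Fin.cases_zero, Finset.mem_image] at this
    obtain ⟨y, hyG, hyx⟩ := this
    have hxy : y = x := hinj hyx
    subst hxy
    exact hAfin.mem_toFinset.mp (hGsub hyG)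

lemma erase_last_eq : (Finset.univ : Finset (Fin (d + 1))).erase (Fin.last d)
    = Finset.univ.map Fin.castSuccEmb := by
  ext j
  simp only [Finset.mem_erase, Finset.mem_univ, and_true, Finset.mem_map]
  constructor
  · intro h
    obtain ⟨y, hy⟩ := Fin.exists_castSucc_eq.mpr h
    exact ⟨y, trivial, hy⟩
  · rintro ⟨y, -, rfl⟩
    exact (Fin.castSucc_lt_last y).ne

lemma erase_castSucc_eq (i₀ : Fin d) :
    (Finset.univ : Finset (Fin (d + 1))).erase i₀.castSucc
    = insert (Fin.last d) ((Finset.univ.erase i₀).map Fin.castSuccEmb) := by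
  ext j
  simp only [Finset.mem_erase, Finset.mem_univ, and_true, Finset.mem_insert, Finset.mem_map,
    Fin.castSuccEmb, Fin.castAddEmb]
  constructor
  · intro h
    rcases Fin.eq_castSucc_or_eq_last j with ⟨y, rfl⟩ | rfl
    · refine Or.inr ⟨y, fun hc => h (by rw [hc]), rfl⟩
    · exact Or.inl rfl
  · rintro (rfl | ⟨y, hy, rfl⟩)
    · exact ((Fin.castSucc_lt_last i₀).ne).symm
    · intro hc
      exact hy (Fin.castSucc_injective _ hc)

lemma gridDelta_succ [∀ i, Fintype (B i)] :
    gridDelta B = (∏ i : Fin d, Fintype.card (B i.castSucc))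
      + Fintype.card (B (Fin.last d)) * gridDelta (fun i : Fin d => B i.castSucc) := by
  classical
  unfold gridDelta
  rw [Fin.sum_univ_castSucc]
  have hlast : (∏ j ∈ Finset.univ.erase (Fin.last d), Fintype.card (B j))
      = ∏ i : Fin d, Fintype.card (B i.castSucc) := by
    rw [erase_last_eq, Finset.prod_map]
    rfl
  have hcs : ∀ i₀ : Fin d, (∏ j ∈ Finset.univ.erase i₀.castSucc, Fintype.card (B j))
      = Fintype.card (B (Fin.last d)) * ∏ j ∈ Finset.univ.erase i₀, Fintype.card (B j.castSucc) := by
    intro i₀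
    rw [erase_castSucc_eq, Finset.prod_insert, Finset.prod_map]
    · rfl
    · simp only [Finset.mem_map]
      rintro ⟨y, -, hy⟩
      exact (Fin.castSucc_lt_last y).ne hy
  rw [hlast]
  rw [Finset.sum_congr rfl (fun i₀ _ => hcs i₀), ← Finset.mul_sum]
  ring

end Part2

section Part3

variable {d : ℕ} {B : Fin (d + 1) → Type} {S : Type} [LinearOrder S]

lemma cwm_snoc (f : (∀ i, B i) → S) (hf : CoordWiseMonotone f) (c : B (Fin.last d)) :
    CoordWiseMonotone (fun a : initGrid B => f (Fin.snoc a c)) := by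
  intro i x x' b b'
  simp only
  rw [Fin.snoc_update, Fin.snoc_update, Fin.snoc_update, Fin.snoc_update]
  exact hf i.castSucc (Fin.snoc x c) (Fin.snoc x' c) b b'

lemma dwc (f : (∀ i, B i) → S) (hf : CoordWiseMonotone f) {a a' : initGrid B}
    {b b' : B (Fin.last d)}
    (h : f (Fin.snoc a b) ≤ f (Fin.snoc a b')) : f (Fin.snoc a' b) ≤ f (Fin.snoc a' b') := by
  have key := hf (Fin.last d) (Fin.snoc a b) (Fin.snoc a' b) b b'
  rw [Fin.update_snoc_last, Fin.update_snoc_last, Fin.update_snoc_last,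
    Fin.update_snoc_last] at key
  exact key.mp h

lemma exists_bottom {γ : Type} [DecidableEq γ] (T : Finset γ) (φ : γ → S) :
    ∀ m, m ≤ T.card → ∃ L, L ⊆ T ∧ L.card = m ∧ ∀ b ∈ L, ∀ c ∈ T \ L, φ b ≤ φ c := by
  intro m
  induction m with
  | zero => intro _; exact ⟨∅, Finset.empty_subset T, Finset.card_empty, by simp⟩
  | succ m ih =>
    intro hm
    obtain ⟨L, hLT, hLcard, hLmin⟩ := ih (Nat.le_of_succ_le hm)
    have hne : (T \ L).Nonempty := by
      rw [← Finset.card_pos, Finset.card_sdiff_of_subset hLT]; omega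
    obtain ⟨b, hbmem, hbmin⟩ := Finset.exists_min_image (T \ L) φ hne
    have hbT : b ∈ T := (Finset.mem_sdiff.mp hbmem).1
    have hbL : b ∉ L := (Finset.mem_sdiff.mp hbmem).2
    refine ⟨insert b L, Finset.insert_subset hbT hLT, ?_, ?_⟩
    · rw [Finset.card_insert_of_notMem hbL, hLcard]
    · intro b' hb' c hc
      have hc' : c ∈ T \ L := by
        rw [Finset.mem_sdiff] at hc ⊢
        exact ⟨hc.1, fun h => hc.2 (Finset.mem_insert_of_mem h)⟩
      rcases Finset.mem_insert.mp hb' with rfl | hmem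
      · exact hbmin c hc'
      · exact hLmin b' hmem c hc'

lemma gd_lower {r : ℕ} (B : Fin r → Type) [∀ i, Fintype (B i)]
    (h : ∀ i, 0 < Fintype.card (B i)) : r ≤ gridDelta B := by
  unfold gridDelta
  calc r = ∑ _i : Fin r, 1 := by simp
    _ ≤ _ := by
        refine Finset.sum_le_sum fun i _ => ?_
        exact Nat.one_le_iff_ne_zero.mpr (Nat.pos_iff_ne_zero.mp
          (Finset.prod_pos fun j _ => h j))

lemma one_le_log_of_two_le {N : ℕ} (h : 2 ≤ N) : 1 ≤ Real.log ((N : ℝ) + 1) := by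
  rw [Real.le_log_iff_exp_le (by positivity)]
  have h3 : (3 : ℝ) ≤ (N : ℝ) + 1 := by
    have : (2 : ℝ) ≤ (N : ℝ) := by exact_mod_cast h
    linarith
  calc Real.exp 1 ≤ 2.7182818286 := Real.exp_one_lt_d9.le
    _ ≤ 3 := by norm_num
    _ ≤ _ := h3

lemma log_cast_mono {a b : ℕ} (h : a ≤ b) : Real.log ((a : ℝ) + 1) ≤ Real.log ((b : ℝ) + 1) :=
  Real.log_le_log (by positivity) (by exact_mod_cast Nat.add_le_add_right h 1)

end Part3

section Part4

set_option maxHeartbeats 1000000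

lemma log_nat_succ_nonneg (n : ℕ) : 0 ≤ Real.log ((n : ℝ) + 1) :=
  Real.log_nonneg (by have := Nat.cast_nonneg (α := ℝ) n; linarith)

lemma log_pow_mono {a b : ℕ} (h : a ≤ b) (β : ℕ) :
    Real.log ((a : ℝ) + 1) ^ β ≤ Real.log ((b : ℝ) + 1) ^ β :=
  pow_le_pow_left₀ (log_nat_succ_nonneg a) (log_cast_mono h) β


def AuxStmt (k d t u : ℕ) : Prop :=
  ∃ α : ℝ, 0 ≤ α ∧ ∃ β : ℕ,
    ∀ (B : Fin (d + 1) → Type) (_ : ∀ i, Fintype (B i))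
      (Ar : Set (initGrid B)) (Al : Set (B (Fin.last d))) (X : Fin u → Set (∀ i, B i)),
      (∀ j, IsBasicSet (X j)) → HasGridComplexity Ar t →
      KkFree (prodSet Ar Al ∩ ⋂ j, X j) k →
      ((prodSet Ar Al ∩ ⋂ j, X j).ncard : ℝ) ≤
        α * ((Ar.ncard : ℝ) + (Al.ncard : ℝ) *
            (gridDelta (fun i : Fin d => B i.castSucc) : ℝ))
          * Real.log ((gridDelta B : ℝ) + 1) ^ β

lemma aux_rhs_nonneg {α : ℝ} (hα : 0 ≤ α) (x y D N : ℝ) (hx : 0 ≤ x) (hy : 0 ≤ y)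
    (hD : 0 ≤ D) (hN : 0 ≤ N) (β : ℕ) :
    0 ≤ α * (x + y * D) * Real.log (N + 1) ^ β := by
  have hlog : 0 ≤ Real.log (N + 1) := Real.log_nonneg (by linarith)
  have h1 : 0 ≤ x + y * D := by positivity
  positivity

lemma aux_zero (k t u : ℕ) (hk : 2 ≤ k) : AuxStmt k 0 t u := by
  have hk1 : (0 : ℝ) ≤ (k : ℝ) - 1 := by
    have : (2 : ℝ) ≤ (k : ℝ) := by exact_mod_cast hk
    linarith
  refine ⟨(k : ℝ) - 1, hk1, 0, ?_⟩
  intro B instB Ar Al X hX hAr hfree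
  set A := prodSet Ar Al ∩ ⋂ j, X j with hA
  have hkA : A.ncard < k := by
    rcases kkfree_dim_zero hfree with h | h
    · exact h
    · omega
  rcases Set.eq_empty_or_nonempty A with hAe | hAne
  · rw [hAe]
    simp only [Set.ncard_empty, Nat.cast_zero]
    exact aux_rhs_nonneg hk1 _ _ _ _ (by positivity) (by positivity) (by positivity)
      (by positivity) 0
  · have hAr1 : (1 : ℝ) ≤ (Ar.ncard : ℝ) := by
      obtain ⟨x, hx⟩ := hAne
      have hxA : x ∈ prodSet Ar Al := hx.1
      have h2 : Ar.Nonempty := ⟨_, hxA.1⟩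
      have := (Set.ncard_pos (Set.toFinite Ar)).mpr h2
      exact_mod_cast this
    have hle : (A.ncard : ℝ) ≤ (k : ℝ) - 1 := by
      have : (A.ncard : ℝ) + 1 ≤ (k : ℝ) := by exact_mod_cast hkA
      linarith
    have hDnn : (0:ℝ) ≤ (Al.ncard : ℝ) * (gridDelta (fun i : Fin 0 => B i.castSucc) : ℝ) := by
      positivity
    rw [pow_zero, mul_one]
    nlinarith [hk1, hAr1, hDnn, hle]

lemma prodSet_univ {d : ℕ} {B : Fin (d + 1) → Type} :
    prodSet (Set.univ : Set (initGrid B)) (Set.univ : Set (B (Fin.last d))) = Set.univ := by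
  ext x; simp [prodSet]

lemma aux_step_u0 (k : ℕ) (hk : 2 ≤ k) (e t : ℕ) (ih : AuxStmt k e 0 t) :
    AuxStmt k (e + 1) t 0 := by
  obtain ⟨α₁, hα₁, β₁, H₁⟩ := ih
  have hk1 : (0 : ℝ) ≤ (k : ℝ) - 1 := by
    have : (2 : ℝ) ≤ (k : ℝ) := by exact_mod_cast hk
    linarith
  refine ⟨max ((k : ℝ) - 1) α₁, le_max_of_le_left hk1, β₁, ?_⟩
  intro B instB Ar Al X hX hAr hfree
  have hinter : (⋂ j : Fin 0, X j) = Set.univ := Set.iInter_of_empty X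
  rw [hinter, Set.inter_univ] at hfree ⊢
  set D : ℝ := (gridDelta (fun i : Fin (e + 1) => B i.castSucc) : ℝ) with hDdef
  have hDnn : 0 ≤ D := by positivity
  set N := gridDelta B with hNdef
  have hmax0 : (0:ℝ) ≤ max ((k : ℝ) - 1) α₁ := le_max_of_le_left hk1
  by_cases hcard : ∀ i, 0 < Fintype.card (B i)
  swap
  · push_neg at hcard
    obtain ⟨i, hi⟩ := hcard
    have h1 : IsEmpty (B i) := Fintype.card_eq_zero_iff.mp (Nat.le_zero.mp hi)
    have hempty : IsEmpty (∀ i, B i) := isEmpty_pi.mpr ⟨i, h1⟩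
    have h2 : prodSet Ar Al = ∅ := Set.eq_empty_of_isEmpty _
    rw [h2]
    simp only [Set.ncard_empty, Nat.cast_zero]
    exact aux_rhs_nonneg hmax0 _ _ _ _ (by positivity) (by positivity)
      hDnn (by positivity) β₁
  · have hN2 : 2 ≤ N := le_trans (by omega) (gd_lower B hcard)
    have hlog1 : 1 ≤ Real.log ((N : ℝ) + 1) := one_le_log_of_two_le hN2
    have hlognn : 0 ≤ Real.log ((N : ℝ) + 1) := by linarith
    have hlogpow : 1 ≤ Real.log ((N : ℝ) + 1) ^ β₁ := one_le_pow₀ hlog1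
    have hlogpownn : 0 ≤ Real.log ((N : ℝ) + 1) ^ β₁ := by positivity
    rw [ncard_prodSet]
    have hArnn : (0:ℝ) ≤ (Ar.ncard : ℝ) := by positivity
    have hAlnn : (0:ℝ) ≤ (Al.ncard : ℝ) := by positivity
    push_cast
    by_cases hAl : Al.ncard < k
    · have h1 : (Al.ncard : ℝ) ≤ (k : ℝ) - 1 := by
        have : ((Al.ncard : ℕ) : ℝ) + 1 ≤ (k : ℝ) := by exact_mod_cast hAl
        linarith
      have c1 : (Ar.ncard : ℝ) * (Al.ncard : ℝ) ≤ ((k:ℝ) - 1) * (Ar.ncard : ℝ) := by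
        nlinarith
      have c2 : ((k:ℝ) - 1) * (Ar.ncard : ℝ)
          ≤ max ((k : ℝ) - 1) α₁ * ((Ar.ncard : ℝ) + (Al.ncard : ℝ) * D) := by
        have h3 := le_max_left ((k : ℝ) - 1) α₁
        have h4 : (0:ℝ) ≤ (Al.ncard : ℝ) * D := mul_nonneg hAlnn hDnn
        nlinarith [mul_le_mul_of_nonneg_right h3 hArnn, mul_nonneg hmax0 h4]
      calc (Ar.ncard : ℝ) * (Al.ncard : ℝ)
          ≤ max ((k : ℝ) - 1) α₁ * ((Ar.ncard : ℝ) + (Al.ncard : ℝ) * D) := le_trans c1 c2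
        _ ≤ max ((k : ℝ) - 1) α₁ * ((Ar.ncard : ℝ) + (Al.ncard : ℝ) * D)
            * Real.log ((N : ℝ) + 1) ^ β₁ := by
            nlinarith [mul_nonneg hmax0 (by positivity :
              (0:ℝ) ≤ (Ar.ncard : ℝ) + (Al.ncard : ℝ) * D)]
    · push_neg at hAl
      have hfreeAr : KkFree Ar k := kkfree_left hfree hAl
      obtain ⟨Y, hY, hArY⟩ := hAr
      have hfree' : KkFree (prodSet (Set.univ : Set (initGrid (fun i : Fin (e+1) => B i.castSucc)))
          (Set.univ : Set ((fun i : Fin (e+1) => B i.castSucc) (Fin.last e))) ∩ ⋂ j, Y j) k := by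
        rw [prodSet_univ, Set.univ_inter, ← hArY]
        exact hfreeAr
      have happ := H₁ (fun i : Fin (e+1) => B i.castSucc) (fun i => instB i.castSucc)
        Set.univ Set.univ Y hY hasGridComplexity_univ_zero hfree'
      rw [prodSet_univ, Set.univ_inter, ← hArY] at happ
      -- identify the bracket with gridDelta of the e+1 grid
      have hbrN : (Set.univ : Set (initGrid (fun i : Fin (e+1) => B i.castSucc))).ncard
          + (Set.univ : Set ((fun i : Fin (e+1) => B i.castSucc) (Fin.last e))).ncard
            * gridDelta (fun i : Fin e => (fun i : Fin (e+1) => B i.castSucc) i.castSucc)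
          = gridDelta (fun i : Fin (e+1) => B i.castSucc) := by
        rw [Set.ncard_univ, Nat.card_eq_fintype_card, Fintype.card_pi,
          Set.ncard_univ, Nat.card_eq_fintype_card,
          gridDelta_succ (B := fun i : Fin (e+1) => B i.castSucc)]
      have happ2 : (Ar.ncard : ℝ) ≤ α₁ * D
          * Real.log ((gridDelta (fun i : Fin (e+1) => B i.castSucc) : ℝ) + 1) ^ β₁ := by
        have := happ
        rw [show ((Set.univ : Set (initGrid (fun i : Fin (e+1) => B i.castSucc))).ncard : ℝ)
            + ((Set.univ : Set ((fun i : Fin (e+1) => B i.castSucc) (Fin.last e))).ncard : ℝ)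
              * (gridDelta (fun i : Fin e => (fun i : Fin (e+1) => B i.castSucc) i.castSucc) : ℝ)
            = D by rw [hDdef]; exact_mod_cast congrArg (fun n : ℕ => (n : ℝ)) hbrN] at this
        exact this
      have hDN : gridDelta (fun i : Fin (e+1) => B i.castSucc) ≤ N := by
        rw [hNdef, gridDelta_succ (B := B)]
        have h1 : 1 ≤ Fintype.card (B (Fin.last (e+1))) := hcard _
        calc gridDelta (fun i : Fin (e+1) => B i.castSucc)
            ≤ Fintype.card (B (Fin.last (e+1))) * gridDelta (fun i : Fin (e+1) => B i.castSucc) :=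
              Nat.le_mul_of_pos_left _ h1
          _ ≤ _ := Nat.le_add_left _ _
      have hlogD : Real.log ((gridDelta (fun i : Fin (e+1) => B i.castSucc) : ℝ) + 1) ^ β₁
          ≤ Real.log ((N : ℝ) + 1) ^ β₁ := log_pow_mono hDN β₁
      have hMA : (Ar.ncard : ℝ) ≤ α₁ * D * Real.log ((N : ℝ) + 1) ^ β₁ := by
        calc (Ar.ncard : ℝ) ≤ α₁ * D
            * Real.log ((gridDelta (fun i : Fin (e+1) => B i.castSucc) : ℝ) + 1) ^ β₁ := happ2
          _ ≤ α₁ * D * Real.log ((N : ℝ) + 1) ^ β₁ := by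
              have : 0 ≤ α₁ * D := mul_nonneg hα₁ hDnn
              nlinarith
      have hα₁max : α₁ ≤ max ((k : ℝ) - 1) α₁ := le_max_right _ _
      calc (Ar.ncard : ℝ) * (Al.ncard : ℝ) = (Al.ncard : ℝ) * (Ar.ncard : ℝ) := mul_comm _ _
        _ ≤ (Al.ncard : ℝ) * (α₁ * D * Real.log ((N : ℝ) + 1) ^ β₁) := by
            exact mul_le_mul_of_nonneg_left hMA hAlnn
        _ = α₁ * ((Al.ncard : ℝ) * D) * Real.log ((N : ℝ) + 1) ^ β₁ := by ring
        _ ≤ max ((k : ℝ) - 1) α₁ * ((Ar.ncard : ℝ) + (Al.ncard : ℝ) * D)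
            * Real.log ((N : ℝ) + 1) ^ β₁ := by
            have h1 : α₁ * ((Al.ncard : ℝ) * D)
                ≤ max ((k : ℝ) - 1) α₁ * ((Ar.ncard : ℝ) + (Al.ncard : ℝ) * D) := by
              nlinarith [mul_nonneg hAlnn hDnn]
            nlinarith
end Part4

section Part5

set_option maxHeartbeats 4000000

lemma aux_step_usucc (k : ℕ) (hk : 2 ≤ k) (e t v : ℕ) (ih : AuxStmt k (e + 1) (t + 2) v) :
    AuxStmt k (e + 1) t (v + 1) := by
  classical
  obtain ⟨α₀, hα₀, β₀, H₀⟩ := ih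
  set K : ℝ := (Real.log (3 / 2))⁻¹ with hK
  have hlog32 : 0 < Real.log (3 / 2 : ℝ) := Real.log_pos (by norm_num)
  have hKpos : 0 < K := inv_pos.mpr hlog32
  refine ⟨α₀ * (1 + K), by positivity, β₀ + 1, ?_⟩
  intro B instB Ar Al X hX hAr hfree
  set D : ℝ := (gridDelta (fun i : Fin (e + 1) => B i.castSucc) : ℝ) with hDdef
  have hDnn : 0 ≤ D := by positivity
  set N := gridDelta B with hNdef
  by_cases hcard : ∀ i, 0 < Fintype.card (B i)
  swap
  · push_neg at hcard
    obtain ⟨i, hi⟩ := hcard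
    have h1 : IsEmpty (B i) := Fintype.card_eq_zero_iff.mp (Nat.le_zero.mp hi)
    have hempty : IsEmpty (∀ i, B i) := isEmpty_pi.mpr ⟨i, h1⟩
    have h2 : prodSet Ar Al ∩ ⋂ j, X j = ∅ := Set.eq_empty_of_isEmpty _
    rw [h2]
    simp only [Set.ncard_empty, Nat.cast_zero]
    exact aux_rhs_nonneg (by positivity) _ _ _ _ (by positivity) (by positivity) hDnn
      (by positivity) (β₀ + 1)
  -- main case
  have hN2 : 2 ≤ N := le_trans (by omega) (gd_lower B hcard)
  have hlog1 : 1 ≤ Real.log ((N : ℝ) + 1) := one_le_log_of_two_le hN2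
  have hlognn : 0 ≤ Real.log ((N : ℝ) + 1) := by linarith
  set Lg : ℝ := Real.log ((N : ℝ) + 1) ^ β₀ with hLg
  have hLgnn : 0 ≤ Lg := by positivity
  have hne : ∀ i, Nonempty (B i) := fun i => Fintype.card_pos_iff.mp (hcard i)
  have hnein : Nonempty (initGrid B) := ⟨fun i => Classical.choice (hne i.castSucc)⟩
  obtain ⟨a₀⟩ := hnein
  obtain ⟨S, lo, f, l, hcwm, hXlast⟩ := hX (Fin.last v)
  set φ : B (Fin.last (e + 1)) → S := fun b => f (Fin.snoc a₀ b) with hφ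
  set V : B (Fin.last (e + 1)) → Set (initGrid B) :=
    fun b => {a | f (Fin.snoc a b) < l} with hV
  have hVbasic : ∀ b, IsBasicSet (V b) :=
    fun b => ⟨S, lo, fun a => f (Fin.snoc a b), l, cwm_snoc f hcwm b, rfl⟩
  have hVmono : ∀ {b b'}, φ b ≤ φ b' → V b' ⊆ V b := by
    intro b b' h a ha
    exact lt_of_le_of_lt (dwc f hcwm (a' := a) h) ha
  set Wm : Option (B (Fin.last (e + 1))) → Set (initGrid B) :=
    fun p => p.elim Set.univ V with hWm
  set Wp : Option (B (Fin.last (e + 1))) → Set (initGrid B) :=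
    fun q => q.elim Set.univ (fun c => (V c)ᶜ) with hWp
  have hWmS : ∀ c, Wm (some c) = V c := fun c => rfl
  have hWmN : Wm none = Set.univ := rfl
  have hWpS : ∀ c, Wp (some c) = (V c)ᶜ := fun c => rfl
  have hWpN : Wp none = Set.univ := rfl
  -- membership in the last basic set, in terms of V
  have hmemX : ∀ x : ∀ i, B i, x ∈ X (Fin.last v) ↔
      (fun i : Fin (e + 1) => x i.castSucc) ∈ V (x (Fin.last (e + 1))) := by
    intro x
    have heq : Fin.snoc (fun i : Fin (e + 1) => x i.castSucc) (x (Fin.last (e + 1))) = x :=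
      Fin.snoc_init_self x
    rw [hXlast]
    constructor
    · intro h
      show f (Fin.snoc _ _) < l
      rw [heq]
      exact h
    · intro h
      have h2 : f (Fin.snoc (fun i : Fin (e + 1) => x i.castSucc) (x (Fin.last (e + 1)))) < l := h
      rw [heq] at h2
      exact h2
  have hXdrop : (⋂ j : Fin (v + 1), X j) ⊆ ⋂ j : Fin v, X j.castSucc := by
    intro x hx
    exact Set.mem_iInter.mpr fun j => Set.mem_iInter.mp hx _
  -- The bound for pieces where the last basic set has been dropped
  have dropBound : ∀ (R' : Set (initGrid B)) (T' : Finset (B (Fin.last (e + 1))))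
      (b₀ : B (Fin.last (e + 1))), HasGridComplexity R' (t + 2) → R' ⊆ Ar →
      (↑T' : Set (B (Fin.last (e + 1)))) ⊆ Al → R' ⊆ V b₀ → (∀ b ∈ T', φ b ≤ φ b₀) →
      ((prodSet R' ↑T' ∩ ⋂ j : Fin (v + 1), X j).ncard : ℝ) ≤
        α₀ * ((R'.ncard : ℝ) + (T'.card : ℝ) * D) * Lg := by
    intro R' T' b₀ hcomp hRAr hTAl hRV hmax
    have hseteq : prodSet R' ↑T' ∩ ⋂ j : Fin (v + 1), X j
        = prodSet R' ↑T' ∩ ⋂ j : Fin v, X j.castSucc := by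
      apply Set.Subset.antisymm
      · exact Set.inter_subset_inter_right _ hXdrop
      · rintro x ⟨hxp, hxD⟩
        refine ⟨hxp, ?_⟩
        rw [iInter_fin_succ X]
        refine ⟨hxD, ?_⟩
        apply (hmemX x).mpr
        have h1 : (fun i : Fin (e + 1) => x i.castSucc) ∈ V b₀ := hRV hxp.1
        have h2 : φ (x (Fin.last (e + 1))) ≤ φ b₀ := hmax _ hxp.2
        exact hVmono h2 h1
    have hfree' : KkFree (prodSet R' ↑T' ∩ ⋂ j : Fin v, X j.castSucc) k := by
      rw [← hseteq]
      apply hfree.mono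
      rintro x ⟨hxp, hxX⟩
      exact ⟨⟨hRAr hxp.1, hTAl hxp.2⟩, hxX⟩
    have happ := H₀ B instB R' ↑T' (fun j => X j.castSucc) (fun j => hX j.castSucc)
      hcomp hfree'
    rw [hseteq]
    rw [Set.ncard_coe_finset] at happ
    exact happ
  -- The main claim, proved by strong induction on the size of the last-coordinate set
  have claim : ∀ s : ℕ, ∀ T : Finset (B (Fin.last (e + 1))),
      ∀ p q : Option (B (Fin.last (e + 1))), T.card = s →
      (↑T : Set (B (Fin.last (e + 1)))) ⊆ Al →
      (∀ c, p = some c → ∀ b ∈ T, φ c ≤ φ b) →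
      (∀ c, q = some c → ∀ b ∈ T, φ b ≤ φ c) →
      ((prodSet (Ar ∩ (Wm p ∩ Wp q)) ↑T ∩ ⋂ j : Fin (v + 1), X j).ncard : ℝ) ≤
        α₀ * (((Ar ∩ (Wm p ∩ Wp q)).ncard : ℝ) + (s : ℝ) * D) * Lg
          * (1 + K * Real.log (s : ℝ)) := by
    intro s
    induction s using Nat.strong_induction_on with
    | _ s IH =>
    intro T p q hTcard hTAl hinvp hinvq
    -- merging the windows with a new V-constraint at a pivot in T
    have hWIN : ∀ b₀ ∈ T, Ar ∩ (Wm p ∩ Wp q) ∩ V b₀ = Ar ∩ (V b₀ ∩ Wp q) := by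
      intro b₀ hb₀
      cases p with
      | none =>
        rw [hWmN]
        ext a
        simp only [Set.mem_inter_iff, Set.mem_univ, true_and, Set.univ_inter]
        tauto
      | some c =>
        have hsub : V b₀ ⊆ V c := hVmono (hinvp c rfl b₀ hb₀)
        rw [hWmS]
        ext a
        simp only [Set.mem_inter_iff]
        constructor
        · rintro ⟨⟨ha, -, hq⟩, hb⟩
          exact ⟨ha, hb, hq⟩
        · rintro ⟨ha, hb, hq⟩
          exact ⟨⟨ha, hsub hb, hq⟩, hb⟩
    have hCOMP : ∀ b₀, HasGridComplexity (Ar ∩ (V b₀ ∩ Wp q)) (t + 2) := by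
      intro b₀
      cases q with
      | none =>
        have h1 : Ar ∩ (V b₀ ∩ Wp none) = Ar ∩ V b₀ := by
          rw [hWpN, Set.inter_univ]
        rw [h1]
        exact (hAr.inter_basic (hVbasic b₀)).succ
      | some c =>
        have h1 : Ar ∩ (V b₀ ∩ Wp (some c)) = (Ar ∩ V b₀) ∩ (V c)ᶜ := by
          rw [hWpS, Set.inter_assoc]
        rw [h1]
        exact (hAr.inter_basic (hVbasic b₀)).inter_basic (hVbasic c).compl
    have hRnn : (0:ℝ) ≤ ((Ar ∩ (Wm p ∩ Wp q)).ncard : ℝ) := by positivity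
    match s, hTcard with
    | 0, hTcard =>
      have hT0 : T = ∅ := Finset.card_eq_zero.mp hTcard
      have hem : prodSet (Ar ∩ (Wm p ∩ Wp q)) (↑T) ∩ ⋂ j : Fin (v + 1), X j = ∅ := by
        rw [hT0]
        ext x
        simp [prodSet]
      rw [hem]
      simp only [Set.ncard_empty, Nat.cast_zero, Real.log_zero, mul_zero, add_zero, zero_mul,
        mul_one]
      all_goals positivity
    | 1, hTcard =>
      obtain ⟨b, hTb⟩ := Finset.card_eq_one.mp hTcard
      have hbT : b ∈ T := by rw [hTb]; exact Finset.mem_singleton_self b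
      have heq1 : prodSet (Ar ∩ (Wm p ∩ Wp q)) ↑T ∩ ⋂ j : Fin (v + 1), X j
          = prodSet (Ar ∩ (Wm p ∩ Wp q) ∩ V b) ↑T ∩ ⋂ j : Fin (v + 1), X j := by
        apply Set.Subset.antisymm
        · rintro x ⟨⟨hxR, hxT⟩, hxX⟩
          have hxlast : x (Fin.last (e + 1)) = b := by
            have : x (Fin.last (e + 1)) ∈ T := hxT
            rw [hTb] at this
            exact Finset.mem_singleton.mp this
          have hxXlast : x ∈ X (Fin.last v) := Set.mem_iInter.mp hxX _
          have h1 := (hmemX x).mp hxXlast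
          rw [hxlast] at h1
          exact ⟨⟨⟨hxR, h1⟩, hxT⟩, hxX⟩
        · rintro x ⟨⟨hxR, hxT⟩, hxX⟩
          exact ⟨⟨hxR.1, hxT⟩, hxX⟩
      rw [heq1]
      have hcomp1 : HasGridComplexity (Ar ∩ (Wm p ∩ Wp q) ∩ V b) (t + 2) := by
        rw [hWIN b hbT]
        exact hCOMP b
      have hdb := dropBound (Ar ∩ (Wm p ∩ Wp q) ∩ V b) T b hcomp1
        (Set.inter_subset_left.trans Set.inter_subset_left) hTAl Set.inter_subset_right
        (fun b' hb' => by
          rw [hTb] at hb'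
          rw [Finset.mem_singleton.mp hb'])
      have hmono : ((Ar ∩ (Wm p ∩ Wp q) ∩ V b).ncard : ℝ)
          ≤ ((Ar ∩ (Wm p ∩ Wp q)).ncard : ℝ) := by
        exact_mod_cast Set.ncard_le_ncard Set.inter_subset_left (Set.toFinite _)
      rw [hTcard] at hdb
      have hfac : (1:ℝ) + K * Real.log ((1:ℕ) : ℝ) = 1 := by
        simp [Real.log_one]
      calc ((prodSet (Ar ∩ (Wm p ∩ Wp q) ∩ V b) ↑T ∩ ⋂ j : Fin (v + 1), X j).ncard : ℝ)
          ≤ α₀ * (((Ar ∩ (Wm p ∩ Wp q) ∩ V b).ncard : ℝ) + ((1:ℕ) : ℝ) * D) * Lg := hdb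
        _ ≤ α₀ * (((Ar ∩ (Wm p ∩ Wp q)).ncard : ℝ) + ((1:ℕ) : ℝ) * D) * Lg := by
            have hb1 : (0:ℝ) ≤ α₀ * Lg := mul_nonneg hα₀ hLgnn
            nlinarith
        _ = α₀ * (((Ar ∩ (Wm p ∩ Wp q)).ncard : ℝ) + ((1:ℕ) : ℝ) * D) * Lg
            * (1 + K * Real.log ((1:ℕ) : ℝ)) := by
            rw [hfac, mul_one]
    | (n + 2), hTcard =>
      set R : Set (initGrid B) := Ar ∩ (Wm p ∩ Wp q) with hR
      set m₀ : ℕ := (n + 3) / 2 with hm₀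
      have hm₀le : m₀ ≤ T.card := by rw [hTcard]; omega
      obtain ⟨L, hLT, hLcard, hLmin⟩ := exists_bottom T φ m₀ hm₀le
      have hLne : L.Nonempty := by rw [← Finset.card_pos, hLcard]; omega
      obtain ⟨bs, hbsL, hbsmax⟩ := Finset.exists_max_image L φ hLne
      have hbsT : bs ∈ T := hLT hbsL
      have hUcard : (T \ L).card = (n + 2) - m₀ := by
        rw [Finset.card_sdiff_of_subset hLT, hTcard, hLcard]
      have hbsmin : ∀ c ∈ T \ L, φ bs ≤ φ c := fun c hc => hLmin bs hbsL c hc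
      set m₁ : ℕ := (n + 2) - m₀ with hm₁
      -- cover by three pieces
      have hcover : prodSet R ↑T ∩ ⋂ j : Fin (v + 1), X j ⊆
          ((prodSet (R ∩ V bs) ↑L ∩ ⋂ j : Fin (v + 1), X j) ∪
            (prodSet (R ∩ (V bs)ᶜ) ↑L ∩ ⋂ j : Fin (v + 1), X j)) ∪
          (prodSet (R ∩ V bs) ↑(T \ L) ∩ ⋂ j : Fin (v + 1), X j) := by
        rintro x ⟨⟨hxR, hxT⟩, hxX⟩
        have hxT' : x (Fin.last (e + 1)) ∈ T := hxT
        by_cases hxL : x (Fin.last (e + 1)) ∈ L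
        · by_cases hxV : (fun i : Fin (e + 1) => x i.castSucc) ∈ V bs
          · exact Or.inl (Or.inl ⟨⟨⟨hxR, hxV⟩, hxL⟩, hxX⟩)
          · exact Or.inl (Or.inr ⟨⟨⟨hxR, hxV⟩, hxL⟩, hxX⟩)
        · have hxU : x (Fin.last (e + 1)) ∈ T \ L := Finset.mem_sdiff.mpr ⟨hxT', hxL⟩
          have hxXlast : x ∈ X (Fin.last v) := Set.mem_iInter.mp hxX _
          have h1 := (hmemX x).mp hxXlast
          have h2 : φ bs ≤ φ (x (Fin.last (e + 1))) := hbsmin _ hxU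
          exact Or.inr ⟨⟨⟨hxR, hVmono h2 h1⟩, hxU⟩, hxX⟩
      -- piece 1 : full piece, drop the last basic set
      have hcomp1 : HasGridComplexity (R ∩ V bs) (t + 2) := by
        rw [hR, hWIN bs hbsT]
        exact hCOMP bs
      have hLAl : (↑L : Set (B (Fin.last (e + 1)))) ⊆ Al :=
        (Finset.coe_subset.mpr hLT).trans hTAl
      have hUAl : (↑(T \ L) : Set (B (Fin.last (e + 1)))) ⊆ Al :=
        (Finset.coe_subset.mpr (Finset.sdiff_subset)).trans hTAl
      have hP1 := dropBound (R ∩ V bs) L bs hcomp1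
        (Set.inter_subset_left.trans Set.inter_subset_left) hLAl Set.inter_subset_right hbsmax
      rw [hLcard] at hP1
      -- piece 2 : lower recursive piece
      have hm₀lt : m₀ < n + 2 := by omega
      have hW2 : Ar ∩ (Wm p ∩ Wp (some bs)) = R ∩ (V bs)ᶜ := by
        rw [hWpS, hR]
        cases q with
        | none =>
          rw [hWpN]
          ext a
          simp only [Set.mem_inter_iff, Set.mem_univ, and_true, Set.mem_compl_iff]
          tauto
        | some c =>
          have hsub : (V bs)ᶜ ⊆ (V c)ᶜ :=
            Set.compl_subset_compl.mpr (hVmono (hinvq c rfl bs hbsT))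
          rw [hWpS]
          ext a
          simp only [Set.mem_inter_iff, Set.mem_compl_iff]
          constructor
          · rintro ⟨ha, hm, hv⟩
            exact ⟨⟨ha, hm, hsub hv⟩, hv⟩
          · rintro ⟨⟨ha, hm, -⟩, hv⟩
            exact ⟨ha, hm, hv⟩
      have hP2 := IH m₀ hm₀lt L p (some bs) hLcard hLAl
        (fun c hc b hb => hinvp c hc b (hLT hb))
        (fun c hc b hb => by
          have : bs = c := Option.some.inj hc
          subst this
          exact hbsmax b hb)
      rw [hW2] at hP2
      -- piece 3 : upper recursive piece
      have hm₁lt : m₁ < n + 2 := by omega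
      have hW3 : Ar ∩ (Wm (some bs) ∩ Wp q) = R ∩ V bs := by
        rw [hR, hWIN bs hbsT, hWmS]
      have hP3 := IH m₁ hm₁lt (T \ L) (some bs) q hUcard hUAl
        (fun c hc b hb => by
          have : bs = c := Option.some.inj hc
          subst this
          exact hbsmin b hb)
        (fun c hc b hb => hinvq c hc b (Finset.sdiff_subset hb))
      rw [hW3] at hP3
      -- combine cardinalities
      have hsum : ((prodSet R ↑T ∩ ⋂ j : Fin (v + 1), X j).ncard : ℝ) ≤
          ((prodSet (R ∩ V bs) ↑L ∩ ⋂ j : Fin (v + 1), X j).ncard : ℝ)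
          + ((prodSet (R ∩ (V bs)ᶜ) ↑L ∩ ⋂ j : Fin (v + 1), X j).ncard : ℝ)
          + ((prodSet (R ∩ V bs) ↑(T \ L) ∩ ⋂ j : Fin (v + 1), X j).ncard : ℝ) := by
        have h1 := Set.ncard_le_ncard hcover (Set.toFinite _)
        have h2 := Set.ncard_union_le
          ((prodSet (R ∩ V bs) ↑L ∩ ⋂ j : Fin (v + 1), X j) ∪
            (prodSet (R ∩ (V bs)ᶜ) ↑L ∩ ⋂ j : Fin (v + 1), X j))
          (prodSet (R ∩ V bs) ↑(T \ L) ∩ ⋂ j : Fin (v + 1), X j)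
        have h3 := Set.ncard_union_le
          (prodSet (R ∩ V bs) ↑L ∩ ⋂ j : Fin (v + 1), X j)
          (prodSet (R ∩ (V bs)ᶜ) ↑L ∩ ⋂ j : Fin (v + 1), X j)
        have h4 := le_trans h1 (le_trans h2 (Nat.add_le_add_right h3 _))
        exact_mod_cast h4
      -- cardinality split of R
      have hsplitcard : ((R ∩ V bs).ncard : ℝ) + ((R ∩ (V bs)ᶜ).ncard : ℝ) = (R.ncard : ℝ) := by
        have h1 : R ∩ (V bs)ᶜ = R \ V bs := (Set.diff_eq R (V bs)).symm
        rw [h1]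
        exact_mod_cast Set.ncard_inter_add_ncard_diff_eq_ncard R (V bs) (Set.toFinite _)
      -- numeric facts
      have hm01 : m₀ + m₁ = n + 2 := by omega
      have hm₁1 : 1 ≤ m₁ := by omega
      have hm₀1 : 1 ≤ m₀ := by omega
      have hm10 : m₁ ≤ m₀ := by omega
      have h32 : 3 * m₀ ≤ 2 * (n + 2) := by omega
      have hm₀R : (0:ℝ) < (m₀ : ℝ) := by exact_mod_cast hm₀1
      have hm₁R : (0:ℝ) < (m₁ : ℝ) := by exact_mod_cast hm₁1
      have hlogm : Real.log ((m₁ : ℕ) : ℝ) ≤ Real.log ((m₀ : ℕ) : ℝ) :=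
        Real.log_le_log hm₁R (by exact_mod_cast hm10)
      have hlogm0nn : 0 ≤ Real.log ((m₀ : ℕ) : ℝ) := Real.log_natCast_nonneg m₀
      have hlogm1nn : 0 ≤ Real.log ((m₁ : ℕ) : ℝ) := Real.log_natCast_nonneg m₁
      have hKey : 1 + K * Real.log ((m₀ : ℕ) : ℝ) + 1 ≤ 1 + K * Real.log (((n:ℕ) + 2 : ℕ) : ℝ) := by
        have hq : (3:ℝ)/2 ≤ (((n:ℕ) + 2 : ℕ) : ℝ) / ((m₀ : ℕ) : ℝ) := by
          rw [div_le_div_iff₀ (by norm_num) hm₀R]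
          have hc1 : ((3:ℕ):ℝ) * ((m₀:ℕ):ℝ) ≤ ((2:ℕ):ℝ) * (((n + 2 :ℕ)):ℝ) := by
            exact_mod_cast h32
          push_cast at hc1 ⊢
          linarith
        have hlogq : Real.log (3/2 : ℝ) ≤
            Real.log (((n:ℕ) + 2 : ℕ) : ℝ) - Real.log ((m₀ : ℕ) : ℝ) := by
          rw [← Real.log_div (by positivity) (ne_of_gt hm₀R)]
          exact Real.log_le_log (by norm_num) hq
        have hKlog : K * Real.log (3/2 : ℝ) = 1 := inv_mul_cancel₀ (ne_of_gt hlog32)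
        have := mul_le_mul_of_nonneg_left hlogq hKpos.le
        rw [hKlog] at this
        linarith
      -- real abbreviations
      have haR : (0:ℝ) ≤ ((R ∩ V bs).ncard : ℝ) := by positivity
      have hbR : (0:ℝ) ≤ ((R ∩ (V bs)ᶜ).ncard : ℝ) := by positivity
      have hm01R : ((m₀:ℕ):ℝ) + ((m₁:ℕ):ℝ) = ((n:ℕ):ℝ) + 2 := by exact_mod_cast hm01
      have hcUcL : 1 + K * Real.log ((m₁ : ℕ) : ℝ) ≤ 1 + K * Real.log ((m₀ : ℕ) : ℝ) := by
        nlinarith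
      have hcU1 : (1:ℝ) ≤ 1 + K * Real.log ((m₁ : ℕ) : ℝ) := by nlinarith
      -- main arithmetic
      have hmain :
          (((R ∩ V bs).ncard : ℝ) + ((m₀:ℕ):ℝ) * D)
          + (((R ∩ (V bs)ᶜ).ncard : ℝ) + ((m₀:ℕ):ℝ) * D) * (1 + K * Real.log ((m₀ : ℕ) : ℝ))
          + (((R ∩ V bs).ncard : ℝ) + ((m₁:ℕ):ℝ) * D) * (1 + K * Real.log ((m₁ : ℕ) : ℝ))
          ≤ ((R.ncard : ℝ) + (((n:ℕ):ℝ) + 2) * D) * (1 + K * Real.log (((n:ℕ) + 2 : ℕ) : ℝ)) := by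
        have e0 : (0:ℝ) ≤ ((R ∩ V bs).ncard : ℝ) + ((m₁:ℕ):ℝ) * D := by positivity
        have e1 : (((R ∩ V bs).ncard : ℝ) + ((m₁:ℕ):ℝ) * D) * (1 + K * Real.log ((m₁ : ℕ) : ℝ))
            ≤ (((R ∩ V bs).ncard : ℝ) + ((m₁:ℕ):ℝ) * D) * (1 + K * Real.log ((m₀ : ℕ) : ℝ)) :=
          mul_le_mul_of_nonneg_left hcUcL e0
        have e2 : (((R ∩ (V bs)ᶜ).ncard : ℝ) + ((m₀:ℕ):ℝ) * D)
              * (1 + K * Real.log ((m₀ : ℕ) : ℝ))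
            + (((R ∩ V bs).ncard : ℝ) + ((m₁:ℕ):ℝ) * D) * (1 + K * Real.log ((m₀ : ℕ) : ℝ))
            = ((R.ncard : ℝ) + (((n:ℕ):ℝ) + 2) * D) * (1 + K * Real.log ((m₀ : ℕ) : ℝ)) := by
          rw [← add_mul]
          congr 1
          have : ((m₀:ℕ):ℝ) * D + ((m₁:ℕ):ℝ) * D = (((n:ℕ):ℝ) + 2) * D := by
            rw [← add_mul, hm01R]
          linarith [hsplitcard]
        have e3 : ((R ∩ V bs).ncard : ℝ) + ((m₀:ℕ):ℝ) * D
            ≤ (R.ncard : ℝ) + (((n:ℕ):ℝ) + 2) * D := by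
          have h1 : ((m₀:ℕ):ℝ) ≤ ((n:ℕ):ℝ) + 2 := by linarith [hm01R, hm₁R]
          have h2 : ((m₀:ℕ):ℝ) * D ≤ (((n:ℕ):ℝ) + 2) * D := mul_le_mul_of_nonneg_right h1 hDnn
          linarith [hsplitcard, hbR]
        have e4 : (0:ℝ) ≤ (R.ncard : ℝ) + (((n:ℕ):ℝ) + 2) * D := by positivity
        have e5 : ((R.ncard : ℝ) + (((n:ℕ):ℝ) + 2) * D)
              * ((1 + K * Real.log ((m₀ : ℕ) : ℝ)) + 1)
            ≤ ((R.ncard : ℝ) + (((n:ℕ):ℝ) + 2) * D)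
              * (1 + K * Real.log (((n:ℕ) + 2 : ℕ) : ℝ)) :=
          mul_le_mul_of_nonneg_left (by linarith) e4
        nlinarith [e1, e2, e3, e5]
      -- put everything together
      have hLgα : (0:ℝ) ≤ α₀ * Lg := mul_nonneg hα₀ hLgnn
      calc ((prodSet R ↑T ∩ ⋂ j : Fin (v + 1), X j).ncard : ℝ)
          ≤ ((prodSet (R ∩ V bs) ↑L ∩ ⋂ j : Fin (v + 1), X j).ncard : ℝ)
            + ((prodSet (R ∩ (V bs)ᶜ) ↑L ∩ ⋂ j : Fin (v + 1), X j).ncard : ℝ)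
            + ((prodSet (R ∩ V bs) ↑(T \ L) ∩ ⋂ j : Fin (v + 1), X j).ncard : ℝ) := hsum
        _ ≤ α₀ * (((R ∩ V bs).ncard : ℝ) + ((m₀:ℕ):ℝ) * D) * Lg
            + α₀ * (((R ∩ (V bs)ᶜ).ncard : ℝ) + ((m₀:ℕ):ℝ) * D) * Lg
              * (1 + K * Real.log ((m₀ : ℕ) : ℝ))
            + α₀ * (((R ∩ V bs).ncard : ℝ) + ((m₁:ℕ):ℝ) * D) * Lg
              * (1 + K * Real.log ((m₁ : ℕ) : ℝ)) := by
            refine add_le_add (add_le_add hP1 hP2) hP3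
        _ = α₀ * Lg * ((((R ∩ V bs).ncard : ℝ) + ((m₀:ℕ):ℝ) * D)
            + (((R ∩ (V bs)ᶜ).ncard : ℝ) + ((m₀:ℕ):ℝ) * D) * (1 + K * Real.log ((m₀ : ℕ) : ℝ))
            + (((R ∩ V bs).ncard : ℝ) + ((m₁:ℕ):ℝ) * D)
              * (1 + K * Real.log ((m₁ : ℕ) : ℝ))) := by ring
        _ ≤ α₀ * Lg * (((R.ncard : ℝ) + (((n:ℕ):ℝ) + 2) * D)
            * (1 + K * Real.log (((n:ℕ) + 2 : ℕ) : ℝ))) := by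
            exact mul_le_mul_of_nonneg_left hmain hLgα
        _ = α₀ * ((R.ncard : ℝ) + (((n:ℕ):ℝ) + 2) * D) * Lg
            * (1 + K * Real.log (((n:ℕ) + 2 : ℕ) : ℝ)) := by ring
        _ = α₀ * ((R.ncard : ℝ) + (((n + 2 : ℕ)):ℝ) * D) * Lg
            * (1 + K * Real.log (((n + 2 : ℕ)) : ℝ)) := by push_cast; ring_nf
  -- apply the claim to the full last-coordinate set
  have hAlfin : Al.Finite := Set.toFinite Al
  have happ := claim Al.ncard hAlfin.toFinset none none
    (by rw [Set.ncard_eq_toFinset_card Al hAlfin])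
    (by rw [Set.Finite.coe_toFinset])
    (fun c hc => by cases hc)
    (fun c hc => by cases hc)
  have hwin0 : Ar ∩ (Wm none ∩ Wp none) = Ar := by
    rw [hWmN, hWpN, Set.univ_inter, Set.inter_univ]
  rw [hwin0, Set.Finite.coe_toFinset] at happ
  -- final bookkeeping
  have hAlN : Al.ncard ≤ N := by
    have h1 : Al.ncard ≤ Fintype.card (B (Fin.last (e + 1))) := ncard_le_fintypeCard Al
    have h2 : Fintype.card (B (Fin.last (e + 1))) ≤ N := by
      rw [hNdef]
      unfold gridDelta
      have hmem : Fin.last (e + 1) ∈ (Finset.univ : Finset (Fin (e + 1 + 1))).erase 0 := by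
        rw [Finset.mem_erase]
        refine ⟨?_, Finset.mem_univ _⟩
        intro hcon
        have := congrArg Fin.val hcon
        simp [Fin.last] at this
      have h3 : Fintype.card (B (Fin.last (e + 1)))
          ≤ ∏ j ∈ (Finset.univ : Finset (Fin (e + 1 + 1))).erase 0, Fintype.card (B j) :=
        Finset.single_le_prod' (f := fun j => Fintype.card (B j)) (fun j _ => hcard j) hmem
      have h4 : (∏ j ∈ (Finset.univ : Finset (Fin (e + 1 + 1))).erase 0, Fintype.card (B j))
          ≤ ∑ i : Fin (e + 1 + 1), ∏ j ∈ Finset.univ.erase i, Fintype.card (B j) :=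
        Finset.single_le_sum
          (f := fun i : Fin (e + 1 + 1) => ∏ j ∈ Finset.univ.erase i, Fintype.card (B j))
          (fun i _ => Nat.zero_le _) (Finset.mem_univ (0 : Fin (e + 1 + 1)))
      omega
    omega
  have hlogAl : Real.log ((Al.ncard : ℕ) : ℝ) ≤ Real.log ((N : ℝ) + 1) := by
    rcases Nat.eq_zero_or_pos Al.ncard with h0 | hpos
    · rw [h0]
      simpa using hlognn
    · apply Real.log_le_log (by exact_mod_cast hpos)
      have : ((Al.ncard : ℕ) : ℝ) ≤ (N : ℝ) := by exact_mod_cast hAlN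
      linarith
  have hfac : 1 + K * Real.log ((Al.ncard : ℕ) : ℝ) ≤ (1 + K) * Real.log ((N : ℝ) + 1) := by
    have h1 : K * Real.log ((Al.ncard : ℕ) : ℝ) ≤ K * Real.log ((N : ℝ) + 1) :=
      mul_le_mul_of_nonneg_left hlogAl hKpos.le
    nlinarith
  have hbrnn : (0:ℝ) ≤ (Ar.ncard : ℝ) + (Al.ncard : ℝ) * D := by positivity
  calc ((prodSet Ar Al ∩ ⋂ j : Fin (v + 1), X j).ncard : ℝ)
      ≤ α₀ * ((Ar.ncard : ℝ) + (Al.ncard : ℝ) * D) * Lg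
        * (1 + K * Real.log ((Al.ncard : ℕ) : ℝ)) := happ
    _ ≤ α₀ * ((Ar.ncard : ℝ) + (Al.ncard : ℝ) * D) * Lg
        * ((1 + K) * Real.log ((N : ℝ) + 1)) := by
        refine mul_le_mul_of_nonneg_left hfac ?_
        positivity
    _ = α₀ * (1 + K) * ((Ar.ncard : ℝ) + (Al.ncard : ℝ) * D)
        * (Lg * Real.log ((N : ℝ) + 1)) := by ring
    _ = α₀ * (1 + K) * ((Ar.ncard : ℝ) + (Al.ncard : ℝ) * D)
        * Real.log ((N : ℝ) + 1) ^ (β₀ + 1) := by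
        rw [pow_succ]

end Part5

section Part6

set_option maxHeartbeats 1000000

lemma aux_all (k : ℕ) (hk : 2 ≤ k) : ∀ d u t, AuxStmt k d t u := by
  intro d
  induction d with
  | zero => intro u t; exact aux_zero k t u hk
  | succ e ihd =>
    intro u
    induction u with
    | zero => intro t; exact aux_step_u0 k hk e t (ihd t 0)
    | succ v ihu => intro t; exact aux_step_usucc k hk e t v (ihu (t + 2))

end Part6


/-- For all `r = m + 1 ≥ 3`, `t, u ≥ 0`, `k ≥ 2` there are `α' ∈ ℝ` and `β' ∈ ℕ` such
that any `K_{k,…,k}`-free subset of split grid-complexity `(t, u)` of a finite `r`-grid `B`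
satisfies `|A| ≤ α' · δ^r_{r-1}(B) · log^{β'}(δ^r_{r-1}(B) + 1)`. -/
theorem split_complexity_zarankiewicz_bound (m t u k : ℕ) (hm : 2 ≤ m) (hk : 2 ≤ k) :
    ∃ (α' : ℝ) (β' : ℕ), ∀ (B : Fin (m + 1) → Type) [∀ i, Fintype (B i)]
      (A : Set (∀ i, B i)), HasSplitGridComplexity A t u → KkFree A k →
      (A.ncard : ℝ) ≤ α' * (gridDelta B : ℝ) *
        Real.log ((gridDelta B : ℝ) + 1) ^ β' := by
  obtain ⟨α, hα, β, H⟩ := aux_all k hk m u t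
  refine ⟨α, β, ?_⟩
  intro B instB A hsplit hfree
  obtain ⟨X, Ar, Al, hX, hAr, hAeq⟩ := hsplit
  have hAeq' : A = prodSet Ar Al ∩ ⋂ j, X j := hAeq
  rw [hAeq'] at hfree ⊢
  have happ := H B instB Ar Al X hX hAr hfree
  have hbound : (Ar.ncard : ℝ) + (Al.ncard : ℝ) *
      (gridDelta (fun i : Fin m => B i.castSucc) : ℝ) ≤ (gridDelta B : ℝ) := by
    have h1 : Ar.ncard ≤ ∏ i : Fin m, Fintype.card (B i.castSucc) := by
      have h0 := ncard_le_fintypeCard Ar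
      rwa [Fintype.card_pi] at h0
    have h2 : Al.ncard ≤ Fintype.card (B (Fin.last m)) := ncard_le_fintypeCard Al
    have h3 : gridDelta B = (∏ i : Fin m, Fintype.card (B i.castSucc))
        + Fintype.card (B (Fin.last m)) * gridDelta (fun i : Fin m => B i.castSucc) :=
      gridDelta_succ (B := B)
    have h4 : Al.ncard * gridDelta (fun i : Fin m => B i.castSucc)
        ≤ Fintype.card (B (Fin.last m)) * gridDelta (fun i : Fin m => B i.castSucc) :=
      Nat.mul_le_mul_right _ h2
    have h5 : Ar.ncard + Al.ncard * gridDelta (fun i : Fin m => B i.castSucc)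
        ≤ gridDelta B := by omega
    exact_mod_cast h5
  have hlognn : 0 ≤ Real.log ((gridDelta B : ℝ) + 1) := log_nat_succ_nonneg _
  have hlgp : 0 ≤ Real.log ((gridDelta B : ℝ) + 1) ^ β := by positivity
  calc ((prodSet Ar Al ∩ ⋂ j, X j).ncard : ℝ)
      ≤ α * ((Ar.ncard : ℝ) + (Al.ncard : ℝ) *
          (gridDelta (fun i : Fin m => B i.castSucc) : ℝ))
        * Real.log ((gridDelta B : ℝ) + 1) ^ β := happ
    _ ≤ α * (gridDelta B : ℝ) * Real.log ((gridDelta B : ℝ) + 1) ^ β :=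
        mul_le_mul_of_nonneg_right (mul_le_mul_of_nonneg_left hbound hα) hlgp
end
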